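/- arXiv:2212.08851 — 3 statements merged into one kernel-verified Lean document; each statement's English description precedes it below -/
import Mathlib

section
/- Let 0 < μ < 1 < ν < 2, let α be real with |α| < 1, and let s > 0 satisfy |α|·((s+1)/s)^(ν-μ) < 1. Then ∑_{n=0}^∞ (1/(s+1))^(ν-1+n) · e_{ν-μ, ν}(α, n-1) = 1/(s^ν - α s^μ (s+1)^(ν-μ)), where e_{ν-μ,ν}(α, -1) = 0 and all powers with real exponents are real powers. (The discrete Laplace transform based at ν-2 of t ↦ e_{ν-μ,ν}(α, t-ν+1) equals 1/(s^ν - α s^μ (s+1)^(ν-μ)).) -/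
/-- Generalized falling factorial `t^(ρ) = Γ(t+1)/Γ(t+1-ρ)` (equal to `0` when
`t+1-ρ` is a pole of `Γ`, by Mathlib's conventions). -/
noncomputable def ffact (t ρ : ℝ) : ℝ := Real.Gamma (t + 1) / Real.Gamma (t + 1 - ρ)

/-- Two-parameter delta discrete Mittag-Leffler function at an integer `n ≥ -1`:
`e_{a,b}(λ, n) = ∑_{k=0}^∞ λ^k (n + k a + b - 1)^(k a + b - 1)/Γ(k a + b)`; in
particular `e_{a,b}(λ, -1) = 0`. -/
noncomputable def mittagLeffler (a b lam : ℝ) (n : ℤ) : ℝ :=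
  ∑' k : ℕ, lam ^ k * ffact ((n : ℝ) + (k : ℝ) * a + b - 1) ((k : ℝ) * a + b - 1) /
    Real.Gamma ((k : ℝ) * a + b)

open MeasureTheory Filter Set Real Topology
set_option maxHeartbeats 1000000

lemma binom_summable {c x : ℝ} (hc : 0 < c) (hx0 : 0 < x) (hx1 : x < 1) :
    Summable (fun m : ℕ => Real.Gamma (m + c) / (Real.Gamma (m + 1) * Real.Gamma c) * x ^ m) := by
  set f : ℕ → ℝ := fun m => Real.Gamma (m + c) / (Real.Gamma (m + 1) * Real.Gamma c) * x ^ m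
    with hf
  have hpos : ∀ m, 0 < f m := by
    intro m
    have h1 : (0:ℝ) < (m:ℝ) + c := by positivity
    have h2 : (0:ℝ) < (m:ℝ) + 1 := by positivity
    exact mul_pos (div_pos (Real.Gamma_pos_of_pos h1)
      (mul_pos (Real.Gamma_pos_of_pos h2) (Real.Gamma_pos_of_pos hc))) (pow_pos hx0 m)
  apply summable_of_ratio_test_tendsto_lt_one hx1
    (Filter.Eventually.of_forall fun n => (hpos n).ne')
  have key : ∀ m : ℕ, ‖f (m+1)‖ / ‖f m‖ = (1 + (c - 1)/((m:ℝ)+1)) * x := by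
    intro m
    have hΓc := (Real.Gamma_pos_of_pos hc).ne'
    have hΓ1 : (0:ℝ) < Real.Gamma ((m:ℝ) + 1) := Real.Gamma_pos_of_pos (by positivity)
    have hΓ2 : (0:ℝ) < Real.Gamma ((m:ℝ) + c) := Real.Gamma_pos_of_pos (by positivity)
    rw [Real.norm_eq_abs, Real.norm_eq_abs, abs_of_pos (hpos _), abs_of_pos (hpos _), hf]
    simp only
    push_cast
    rw [show (m:ℝ) + 1 + c = ((m:ℝ) + c) + 1 by ring,
      Real.Gamma_add_one (by positivity : (m:ℝ) + c ≠ 0),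
      show (m:ℝ) + 1 + 1 = ((m:ℝ) + 1) + 1 by ring,
      Real.Gamma_add_one (by positivity : (m:ℝ) + 1 ≠ 0)]
    field_simp
    ring
  rw [show (𝓝 x) = 𝓝 ((1 + 0) * x) by norm_num]
  apply Filter.Tendsto.congr (fun m => (key m).symm)
  apply Filter.Tendsto.mul _ tendsto_const_nhds
  apply Filter.Tendsto.add tendsto_const_nhds
  apply Filter.Tendsto.const_div_atTop
  exact tendsto_natCast_atTop_atTop.atTop_add tendsto_const_nhds

lemma binom_hasSum {c x : ℝ} (hc : 0 < c) (hx0 : 0 < x) (hx1 : x < 1) :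
    HasSum (fun m : ℕ => Real.Gamma (m + c) / (Real.Gamma (m + 1) * Real.Gamma c) * x ^ m)
      ((1 - x) ^ (-c)) := by
  have hsum := binom_summable hc hx0 hx1
  have h1x : (0:ℝ) < 1 - x := by linarith
  have hΓc : (0:ℝ) < Real.Gamma c := Real.Gamma_pos_of_pos hc
  rw [hsum.hasSum_iff]
  set F : ℕ → ℝ → ℝ := fun m t =>
    Real.exp (-t) * t ^ ((m:ℝ) + c - 1) * (x ^ m / (Real.Gamma ((m:ℝ) + 1) * Real.Gamma c))
    with hF
  have hint : ∀ m : ℕ, IntegrableOn (F m) (Ioi 0) := fun m =>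
    (Real.GammaIntegral_convergent (by positivity : (0:ℝ) < (m:ℝ) + c)).mul_const _
  have hFnn : ∀ m : ℕ, ∀ t ∈ Ioi (0:ℝ), 0 ≤ F m t := by
    intro m t ht
    have h1 : (0:ℝ) < Real.Gamma ((m:ℝ) + 1) := Real.Gamma_pos_of_pos (by positivity)
    have ht0 : (0:ℝ) < t := ht
    positivity
  have hval : ∀ m : ℕ, ∫ t in Ioi 0, F m t
      = Real.Gamma ((m:ℝ) + c) / (Real.Gamma ((m:ℝ) + 1) * Real.Gamma c) * x ^ m := by
    intro m
    rw [hF]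
    simp only
    rw [MeasureTheory.integral_mul_const, ← Real.Gamma_eq_integral (by positivity : (0:ℝ) < (m:ℝ) + c)]
    ring
  have hlint : ∀ m : ℕ, (∫⁻ t in Ioi 0, ‖F m t‖₊) = ENNReal.ofReal
      (Real.Gamma ((m:ℝ) + c) / (Real.Gamma ((m:ℝ) + 1) * Real.Gamma c) * x ^ m) := by
    intro m
    have e1 : (∫⁻ t in Ioi 0, (‖F m t‖₊ : ENNReal)) = ∫⁻ t in Ioi 0, ENNReal.ofReal (F m t) := by
      apply lintegral_congr_ae
      filter_upwards [self_mem_ae_restrict measurableSet_Ioi] with t ht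
      exact Real.enorm_eq_ofReal (hFnn m t ht)
    rw [e1, ← MeasureTheory.ofReal_integral_eq_lintegral_ofReal (hint m)
      ((ae_restrict_iff' measurableSet_Ioi).2 (Filter.Eventually.of_forall (hFnn m))), hval m]
  calc (∑' m : ℕ, Real.Gamma (m + c) / (Real.Gamma (m + 1) * Real.Gamma c) * x ^ m)
      = ∑' m : ℕ, ∫ t in Ioi 0, F m t := by
        congr 1; funext m; rw [hval m]
    _ = ∫ t in Ioi 0, ∑' m : ℕ, F m t := by
        refine (MeasureTheory.integral_tsum (fun m => (hint m).aestronglyMeasurable) ?_).symm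
        rw [show (fun i : ℕ => ∫⁻ a in Ioi 0, ‖F i a‖ₑ) = _ from funext hlint]
        rw [← ENNReal.ofReal_tsum_of_nonneg (fun m => le_of_lt ?_) hsum]
        · exact ENNReal.ofReal_ne_top
        · have h1 : (0:ℝ) < (m:ℝ) + c := by positivity
          have h2 : (0:ℝ) < (m:ℝ) + 1 := by positivity
          exact mul_pos (div_pos (Real.Gamma_pos_of_pos h1)
            (mul_pos (Real.Gamma_pos_of_pos h2) hΓc)) (pow_pos hx0 m)
    _ = ∫ t in Ioi 0, t ^ (c - 1) * Real.exp (-((1 - x) * t)) / Real.Gamma c := by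
        refine setIntegral_congr_fun measurableSet_Ioi (fun t ht => ?_)
        have ht0 : (0:ℝ) < t := ht
        have h1 : ∀ m : ℕ, F m t
            = (Real.exp (-t) * t ^ (c - 1) / Real.Gamma c) * ((x * t) ^ m / m.factorial) := by
          intro m
          rw [hF]
          simp only
          rw [show ((m:ℝ) + c - 1) = (m:ℝ) + (c - 1) by ring, Real.rpow_add ht0,
            Real.rpow_natCast, Real.Gamma_nat_eq_factorial, mul_pow]
          have : (m.factorial : ℝ) ≠ 0 := Nat.cast_ne_zero.2 m.factorial_ne_zero
          field_simp
        rw [funext h1, tsum_mul_left]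
        have hexp : (∑' m : ℕ, ((x * t) ^ m / m.factorial : ℝ)) = Real.exp (x * t) := by
          rw [Real.exp_eq_exp_ℝ, NormedSpace.exp_eq_tsum_div]
        rw [hexp, show -((1 - x) * t) = -t + x * t by ring, Real.exp_add]
        ring
    _ = (1 - x) ^ (-c) := by
        rw [MeasureTheory.integral_div, Real.integral_rpow_mul_exp_neg_mul_Ioi hc h1x,
          mul_div_assoc, div_self hΓc.ne', mul_one, one_div, Real.inv_rpow h1x.le,
          ← Real.rpow_neg h1x.le]

lemma shifted_hasSum {x a ν : ℝ} (hx0 : 0 < x) (hx1 : x < 1) (hν : 0 < ν) (ha : 0 < a)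
    (β : ℝ) (k : ℕ) :
    HasSum (fun n : ℕ => x ^ (ν - 1 + (n:ℝ)) *
        (β ^ k * (Real.Gamma ((n:ℝ) + ((k:ℝ) * a + ν) - 1) / Real.Gamma n) /
          Real.Gamma ((k:ℝ) * a + ν)))
      ((x ^ ν * (1 - x) ^ (-ν)) * (β * (1 - x) ^ (-a)) ^ k) := by
  have h1x : (0:ℝ) < 1 - x := by linarith
  have hc : (0:ℝ) < (k:ℝ) * a + ν := by positivity
  set g : ℕ → ℝ := fun n => x ^ (ν - 1 + (n:ℝ)) *
      (β ^ k * (Real.Gamma ((n:ℝ) + ((k:ℝ) * a + ν) - 1) / Real.Gamma n) /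
        Real.Gamma ((k:ℝ) * a + ν)) with hg
  have h3 := (binom_hasSum hc hx0 hx1).mul_left (β ^ k * x ^ ν)
  have h2 : (fun m : ℕ => g (m + 1)) = fun m : ℕ =>
      β ^ k * x ^ ν * (Real.Gamma (m + ((k:ℝ) * a + ν)) /
        (Real.Gamma (m + 1) * Real.Gamma ((k:ℝ) * a + ν)) * x ^ m) := by
    funext m
    rw [hg]
    simp only
    push_cast
    rw [show ν - 1 + ((m:ℝ) + 1) = ν + (m:ℝ) by ring, Real.rpow_add hx0, Real.rpow_natCast,
      show (m:ℝ) + 1 + ((k:ℝ) * a + ν) - 1 = (m:ℝ) + ((k:ℝ) * a + ν) by ring]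
    ring
  rw [← h2] at h3
  have h4 := (hasSum_nat_add_iff (f := g) 1).mp h3
  have hg0 : g 0 = 0 := by
    rw [hg]
    simp [Real.Gamma_zero]
  rw [Finset.sum_range_one, hg0, add_zero] at h4
  convert h4 using 1
  · rfl
  rw [show -((k:ℝ) * a + ν) = (-a) * (k:ℝ) + (-ν) by ring, Real.rpow_add h1x,
    Real.rpow_mul h1x.le, Real.rpow_natCast, mul_pow]
  ring

/-- For `0 < μ < 1 < ν < 2`, `|α| < 1` and `s > 0` with `|α|((s+1)/s)^(ν-μ) < 1`,
the discrete Laplace transform based at `ν - 2` of `t ↦ e_{ν-μ,ν}(α, t-ν+1)` equals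
`1/(s^ν - α s^μ (s+1)^(ν-μ))`, where `e_{ν-μ,ν}(α, -1) = 0` and powers with real
exponents are real powers. -/
theorem laplace_mittag_leffler_two (μ ν α s : ℝ)
    (hμ0 : 0 < μ) (hμν : μ < 1) (hν1 : 1 < ν) (hν2 : ν < 2)
    (hα : |α| < 1) (hs : 0 < s) (hconv : |α| * ((s + 1) / s) ^ (ν - μ) < 1) :
    ∑' n : ℕ, (1 / (s + 1)) ^ (ν - 1 + (n : ℝ)) * mittagLeffler (ν - μ) ν α ((n : ℤ) - 1)
      = 1 / (s ^ ν - α * s ^ μ * (s + 1) ^ (ν - μ)) := by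
  have hs1 : (0:ℝ) < s + 1 := by linarith
  set x := 1/(s+1) with hxdef
  have hx0 : 0 < x := by positivity
  have hx1 : x < 1 := by rw [hxdef, div_lt_one hs1]; linarith
  have h1x : (0:ℝ) < 1 - x := by linarith
  have h1xeq : 1 - x = s / (s+1) := by rw [hxdef]; field_simp; ring
  set a := ν - μ with hadef
  have ha : 0 < a := by rw [hadef]; linarith
  have hν : (0:ℝ) < ν := by linarith
  have hA : (1 - x) ^ (-a) = ((s+1)/s) ^ a := by
    rw [h1xeq, Real.rpow_neg (by positivity), ← Real.inv_rpow (by positivity), inv_div]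
  set G : ℕ → ℕ → ℝ := fun n k => x ^ (ν - 1 + (n:ℝ)) *
      (α ^ k * (Real.Gamma ((n:ℝ) + ((k:ℝ) * a + ν) - 1) / Real.Gamma n) /
        Real.Gamma ((k:ℝ) * a + ν)) with hG
  have hr : |α| * (1 - x) ^ (-a) < 1 := by rw [hA]; exact hconv
  have hLHS : ∀ n : ℕ, x ^ (ν - 1 + (n:ℝ)) * mittagLeffler (ν - μ) ν α ((n:ℤ) - 1)
      = ∑' k, G n k := by
    intro n
    rw [mittagLeffler, ← tsum_mul_left]
    congr 1; funext k
    rw [ffact, hG]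
    simp only
    push_cast
    ring_nf
    rw [hadef]
    ring_nf
  have hGsum : ∀ k : ℕ, HasSum (fun n => G n k)
      ((x ^ ν * (1 - x) ^ (-ν)) * (α * (1 - x) ^ (-a)) ^ k) :=
    fun k => shifted_hasSum hx0 hx1 hν ha α k
  have habs : ∀ k : ℕ, HasSum (fun n => |G n k|)
      ((x ^ ν * (1 - x) ^ (-ν)) * (|α| * (1 - x) ^ (-a)) ^ k) := by
    intro k
    have h := shifted_hasSum hx0 hx1 hν ha |α| k
    have he : (fun n : ℕ => |G n k|) = fun n : ℕ => x ^ (ν - 1 + (n:ℝ)) *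
        (|α| ^ k * (Real.Gamma ((n:ℝ) + ((k:ℝ) * a + ν) - 1) / Real.Gamma n) /
          Real.Gamma ((k:ℝ) * a + ν)) := by
      funext n
      have hc : (0:ℝ) < (k:ℝ) * a + ν := by positivity
      have hn1 : (0:ℝ) < (n:ℝ) + ((k:ℝ) * a + ν) - 1 := by
        have h1 : (0:ℝ) ≤ (n:ℝ) := Nat.cast_nonneg n
        have h2 : (0:ℝ) ≤ (k:ℝ) * a := by positivity
        nlinarith [hν1]
      rw [hG]
      simp only
      rw [abs_mul, abs_of_pos (Real.rpow_pos_of_pos hx0 _), abs_div, abs_mul, abs_pow,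
        abs_div, abs_of_pos (Real.Gamma_pos_of_pos hn1),
        abs_of_nonneg (Real.Gamma_nonneg_of_nonneg (Nat.cast_nonneg n)),
        abs_of_pos (Real.Gamma_pos_of_pos hc)]
    rw [he]
    exact h
  have r1 : 0 ≤ |α| * (1-x) ^ (-a) := by positivity
  have hgeo : Summable (fun k : ℕ => (x ^ ν * (1-x) ^ (-ν)) * (|α| * (1-x) ^ (-a)) ^ k) :=
    (summable_geometric_of_lt_one r1 hr).mul_left _
  have hsum2 : Summable (Function.uncurry (fun k n => G n k)) := by
    rw [← summable_abs_iff, summable_prod_of_nonneg (fun p => abs_nonneg _)]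
    exact ⟨fun k => (habs k).summable, hgeo.congr (fun k => ((habs k).tsum_eq).symm)⟩
  have hnorm : ‖α * (1-x) ^ (-a)‖ < 1 := by
    rw [Real.norm_eq_abs, abs_mul, abs_of_pos (Real.rpow_pos_of_pos h1x _)]
    exact hr
  have hsν : (0:ℝ) < s ^ ν := Real.rpow_pos_of_pos hs ν
  have hs1ν : (0:ℝ) < (s+1) ^ ν := Real.rpow_pos_of_pos hs1 ν
  have hE1 : x ^ ν * (1-x) ^ (-ν) = (s ^ ν)⁻¹ := by
    rw [h1xeq, hxdef, one_div, Real.rpow_neg (by positivity), Real.div_rpow hs.le hs1.le,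
      Real.inv_rpow hs1.le]
    field_simp
  have hE3 : s ^ ν * ((s+1)/s) ^ a = s ^ μ * (s+1) ^ a := by
    rw [Real.div_rpow hs1.le hs.le]
    have h5 : s ^ ν / s ^ a = s ^ μ := by
      rw [← Real.rpow_sub hs]; congr 1; rw [hadef]; ring
    rw [← h5]; ring
  calc (∑' n : ℕ, x ^ (ν - 1 + (n : ℝ)) * mittagLeffler (ν - μ) ν α ((n:ℤ) - 1))
      = ∑' n : ℕ, ∑' k : ℕ, G n k := by
        congr 1; funext n; exact hLHS n
    _ = ∑' k : ℕ, ∑' n : ℕ, G n k := Summable.tsum_comm hsum2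
    _ = ∑' k : ℕ, (x ^ ν * (1-x) ^ (-ν)) * (α * (1-x) ^ (-a)) ^ k := by
        congr 1; funext k; exact (hGsum k).tsum_eq
    _ = (x ^ ν * (1-x) ^ (-ν)) * (1 - α * (1-x) ^ (-a))⁻¹ := by
        rw [tsum_mul_left, tsum_geometric_of_norm_lt_one hnorm]
    _ = 1 / (s ^ ν - α * s ^ μ * (s + 1) ^ a) := by
        rw [hE1, hA, ← mul_inv, one_div]
        congr 1
        rw [mul_sub, mul_one,
          show s ^ ν * (α * ((s+1)/s) ^ a) = α * (s ^ ν * ((s+1)/s) ^ a) by ring, hE3]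
        ring
end

section
/- Let 0 < μ < 1 < ν < 2 and let α be real with |α| < 1. Let Y : ℕ → ℝ be bounded and define H : {1, 2, ...} → ℝ by H(t+1) := -(g_Y(t+2) - 2 g_Y(t+1) + g_Y(t)) + α (W_Y(t+1) - W_Y(t)) for t ∈ ℕ. Then for every n ∈ ℕ, Y(n) = [e_{ν-μ,ν-1}(α, n) + α(1-ν) e_{ν-μ,ν}(α, n-1) - α e_{ν-μ,ν-μ}(α, n)]·Y(0) + (1-α) e_{ν-μ,ν}(α, n-1)·((1-ν)Y(0) + Y(1)) - ∑_{j=1}^{n} e_{ν-μ,ν}(α, n-j-1) H(j), where e_{ν-μ,ν}(α, -1) = 0. (General solution representation of the implicit fractional difference equation -Δ^ν y(t) + α Δ^μ y(t+ν-μ) = h(t+ν-1).) -/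
/-- `g_Y(t) = (1/Γ(2-ν)) ∑_{j=0}^{t} (t+1-ν-j)^(1-ν) Y(j)`, so that
`Δ^ν y(t) = g_Y(t+2) - 2g_Y(t+1) + g_Y(t)` (with `Y(n) = y(ν-2+n)`). -/
noncomputable def gY (ν : ℝ) (Y : ℕ → ℝ) (t : ℕ) : ℝ :=
  (1 / Real.Gamma (2 - ν)) *
    ∑ j ∈ Finset.range (t + 1), ffact ((t : ℝ) + 1 - ν - (j : ℝ)) (1 - ν) * Y j

/-- `W_Y(t) = (1/Γ(1-μ)) ∑_{j=0}^{t} (t-μ-j)^(-μ) Y(j+1)`, so that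
`Δ^μ y(t+ν-μ) = W_Y(t+1) - W_Y(t)` (with `Y(n) = y(ν-2+n)`). -/
noncomputable def WY (μ : ℝ) (Y : ℕ → ℝ) (t : ℕ) : ℝ :=
  (1 / Real.Gamma (1 - μ)) *
    ∑ j ∈ Finset.range (t + 1), ffact ((t : ℝ) - μ - (j : ℝ)) (-μ) * Y (j + 1)

noncomputable def cc (β : ℝ) (n : ℕ) : ℝ :=
  Real.Gamma (n + β) / (Real.Gamma (n + 1) * Real.Gamma β)

lemma gamma_nat_pos (n : ℕ) : 0 < Real.Gamma ((n : ℝ) + 1) :=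
  Real.Gamma_pos_of_pos (by positivity)

lemma cc_zero {β : ℝ} (hβ : Real.Gamma β ≠ 0) : cc β 0 = 1 := by
  simp [cc, Real.Gamma_one, hβ]

lemma cc_of_gamma_zero {β : ℝ} (hβ : Real.Gamma β = 0) (n : ℕ) : cc β n = 0 := by
  simp [cc, hβ]

lemma cc_one {β : ℝ} (hβ : 0 < β) : cc β 1 = β := by
  have h1 : Real.Gamma (1 + β) = β * Real.Gamma β := by
    rw [add_comm]; exact Real.Gamma_add_one (ne_of_gt hβ)
  have h2 : Real.Gamma β ≠ 0 := ne_of_gt (Real.Gamma_pos_of_pos hβ)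
  simp only [cc, Nat.cast_one, h1]
  rw [show (1:ℝ)+1 = 2 by norm_num, Real.Gamma_two]
  field_simp

lemma cc_step {β : ℝ} (hβ : 0 < β) (n : ℕ) :
    ((n : ℝ) + 1) * cc β (n + 1) = ((n : ℝ) + β) * cc β n := by
  have hnb : ((n : ℝ) + β) ≠ 0 := by positivity
  have h1 : Real.Gamma ((n : ℝ) + 1 + β) = ((n : ℝ) + β) * Real.Gamma ((n : ℝ) + β) := by
    rw [show (n : ℝ) + 1 + β = ((n : ℝ) + β) + 1 by ring]
    exact Real.Gamma_add_one hnb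
  have h2 : Real.Gamma ((n : ℝ) + 1 + 1) = ((n : ℝ) + 1) * Real.Gamma ((n : ℝ) + 1) := by
    exact Real.Gamma_add_one (by positivity)
  have h3 : Real.Gamma ((n : ℝ) + 1) ≠ 0 := ne_of_gt (gamma_nat_pos n)
  have h4 : Real.Gamma β ≠ 0 := ne_of_gt (Real.Gamma_pos_of_pos hβ)
  simp only [cc]
  push_cast
  rw [h1, h2]
  field_simp

lemma cc_pascal (β : ℝ) (n : ℕ) : cc β (n + 1) - cc β n = cc (β - 1) (n + 1) := by
  rcases eq_or_ne (Real.Gamma β) 0 with hβ | hβ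
  · have hβ' : Real.Gamma (β - 1) = 0 := by
      rw [Real.Gamma_eq_zero_iff] at hβ ⊢
      obtain ⟨m, rfl⟩ := hβ
      exact ⟨m + 1, by push_cast; ring⟩
    simp [cc_of_gamma_zero hβ, cc_of_gamma_zero hβ']
  · rcases eq_or_ne β 1 with rfl | hβ1
    · have h1 : ∀ m : ℕ, cc (1:ℝ) m = 1 := by
        intro m
        simp only [cc, Real.Gamma_one, mul_one]
        exact div_self (ne_of_gt (gamma_nat_pos m))
      have h0 : cc (1 - 1 : ℝ) (n+1) = 0 := by
        norm_num [cc, Real.Gamma_zero]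
      rw [h1, h1, h0, sub_self]
    · -- β is not 1 and Γ β ≠ 0, so β is not a nonpositive integer
      have hβnp : ∀ m : ℕ, β ≠ -(m:ℝ) := by
        intro m hm
        exact hβ (Real.Gamma_eq_zero_iff β |>.2 ⟨m, hm⟩)
      have hb1 : β - 1 ≠ 0 := sub_ne_zero.2 hβ1
      have hΓb1 : Real.Gamma (β - 1) ≠ 0 := by
        intro h
        obtain ⟨m, hm⟩ := (Real.Gamma_eq_zero_iff _).1 h
        rcases m with _ | m
        · exact hβ1 (by push_cast at hm; linarith)
        · exact hβnp m (by push_cast at hm ⊢; linarith)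
      have hnβ : (n : ℝ) + β ≠ 0 := by
        intro h
        exact hβnp n (by linarith)
      have e1 : Real.Gamma ((n : ℝ) + 1 + β) = ((n:ℝ) + β) * Real.Gamma ((n:ℝ) + β) := by
        rw [show (n : ℝ) + 1 + β = ((n:ℝ) + β) + 1 by ring]
        exact Real.Gamma_add_one hnβ
      have e2 : Real.Gamma ((n : ℝ) + 1 + 1) = ((n:ℝ) + 1) * Real.Gamma ((n:ℝ) + 1) :=
        Real.Gamma_add_one (by positivity)
      have e3 : Real.Gamma β = (β - 1) * Real.Gamma (β - 1) := by
        conv_lhs => rw [show β = (β - 1) + 1 by ring]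
        exact Real.Gamma_add_one hb1
      have h3 : Real.Gamma ((n : ℝ) + 1) ≠ 0 := ne_of_gt (gamma_nat_pos n)
      simp only [cc]
      push_cast
      rw [show (n:ℝ) + 1 + (β - 1) = (n:ℝ) + β by ring, e1, e2, e3]
      field_simp
      ring

lemma cc_vandermonde {x y : ℝ} (hx : 0 < x) (hy : 0 < y) (M : ℕ) :
    ∑ p ∈ Finset.HasAntidiagonal.antidiagonal M, cc x p.1 * cc y p.2 = cc (x + y) M := by
  induction M with
  | zero =>
      simp [cc_zero (ne_of_gt (Real.Gamma_pos_of_pos hx)),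
        cc_zero (ne_of_gt (Real.Gamma_pos_of_pos hy)),
        cc_zero (ne_of_gt (Real.Gamma_pos_of_pos (by linarith : (0:ℝ) < x + y)))]
  | succ M ih =>
      have hM1 : ((M : ℝ) + 1) ≠ 0 := by positivity
      apply mul_left_cancel₀ hM1
      have key : ((M : ℝ) + 1) * ∑ p ∈ Finset.HasAntidiagonal.antidiagonal (M+1), cc x p.1 * cc y p.2
          = ((M : ℝ) + x + y) * ∑ p ∈ Finset.HasAntidiagonal.antidiagonal M, cc x p.1 * cc y p.2 := by
        rw [Finset.mul_sum, Finset.mul_sum]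
        have h1 : ∀ p ∈ Finset.HasAntidiagonal.antidiagonal (M+1),
            ((M : ℝ) + 1) * (cc x p.1 * cc y p.2)
            = ((p.1 : ℝ)) * (cc x p.1 * cc y p.2) + ((p.2 : ℝ)) * (cc x p.1 * cc y p.2) := by
          intro p hp
          have := Finset.HasAntidiagonal.mem_antidiagonal.mp hp
          have : ((p.1 : ℝ)) + (p.2 : ℝ) = (M : ℝ) + 1 := by exact_mod_cast congrArg Nat.cast this
          rw [← this]; ring
        rw [Finset.sum_congr rfl h1, Finset.sum_add_distrib]
        have h2 : ∑ p ∈ Finset.HasAntidiagonal.antidiagonal (M+1), ((p.1 : ℝ)) * (cc x p.1 * cc y p.2)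
            = ∑ p ∈ Finset.HasAntidiagonal.antidiagonal M, ((p.1 : ℝ) + x) * (cc x p.1 * cc y p.2) := by
          rw [Finset.Nat.sum_antidiagonal_succ
            (f := fun p => ((p.1 : ℝ)) * (cc x p.1 * cc y p.2))]
          simp only [Nat.cast_zero, zero_mul, zero_add]
          apply Finset.sum_congr rfl
          intro p _
          push_cast
          have := cc_step hx p.1
          calc ((p.1 : ℝ) + 1) * (cc x (p.1 + 1) * cc y p.2)
              = (((p.1 : ℝ) + 1) * cc x (p.1 + 1)) * cc y p.2 := by ring
            _ = (((p.1 : ℝ) + x) * cc x p.1) * cc y p.2 := by rw [this]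
            _ = ((p.1 : ℝ) + x) * (cc x p.1 * cc y p.2) := by ring
        have h3 : ∑ p ∈ Finset.HasAntidiagonal.antidiagonal (M+1), ((p.2 : ℝ)) * (cc x p.1 * cc y p.2)
            = ∑ p ∈ Finset.HasAntidiagonal.antidiagonal M, ((p.2 : ℝ) + y) * (cc x p.1 * cc y p.2) := by
          rw [Finset.Nat.sum_antidiagonal_succ'
            (f := fun p => ((p.2 : ℝ)) * (cc x p.1 * cc y p.2))]
          simp only [Nat.cast_zero, zero_mul, zero_add]
          apply Finset.sum_congr rfl
          intro p _
          push_cast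
          have := cc_step hy p.2
          calc ((p.2 : ℝ) + 1) * (cc x p.1 * cc y (p.2 + 1))
              = cc x p.1 * (((p.2 : ℝ) + 1) * cc y (p.2 + 1)) := by ring
            _ = cc x p.1 * (((p.2 : ℝ) + y) * cc y p.2) := by rw [this]
            _ = ((p.2 : ℝ) + y) * (cc x p.1 * cc y p.2) := by ring
        rw [h2, h3, ← Finset.sum_add_distrib]
        apply Finset.sum_congr rfl
        intro p hp
        have hps := Finset.HasAntidiagonal.mem_antidiagonal.mp hp
        have : ((p.1 : ℝ)) + (p.2 : ℝ) = (M : ℝ) := by exact_mod_cast congrArg Nat.cast hps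
        have : ((p.1:ℝ) + x) + ((p.2:ℝ) + y) = (M:ℝ) + x + y := by linarith
        calc ((p.1:ℝ) + x) * (cc x p.1 * cc y p.2) + ((p.2:ℝ) + y) * (cc x p.1 * cc y p.2)
            = (((p.1:ℝ) + x) + ((p.2:ℝ) + y)) * (cc x p.1 * cc y p.2) := by ring
          _ = ((M:ℝ) + x + y) * (cc x p.1 * cc y p.2) := by rw [this]
      rw [key, ih, cc_step (by linarith : (0:ℝ) < x + y) M]
      ring

lemma cc_eq_prod {b : ℝ} (hb : 0 < b) (n : ℕ) :
    cc b n = (∏ i ∈ Finset.range n, (b + i)) / (Nat.factorial n : ℝ) := by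
  induction n with
  | zero => simp [cc_zero (ne_of_gt (Real.Gamma_pos_of_pos hb))]
  | succ n ih =>
      have hstep := cc_step hb n
      have hM1 : ((n : ℝ) + 1) ≠ 0 := by positivity
      have : cc b (n+1) = ((n:ℝ) + b) * cc b n / ((n:ℝ) + 1) := by
        field_simp at hstep ⊢; linarith [hstep]
      rw [this, ih, Finset.prod_range_succ, Nat.factorial_succ]
      push_cast
      field_simp
      ring

lemma cc_nonneg {b : ℝ} (hb : 0 < b) (n : ℕ) : 0 ≤ cc b n := by
  rw [cc_eq_prod hb]
  apply div_nonneg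
  · exact Finset.prod_nonneg fun i _ => by positivity
  · positivity

lemma cc_le {a b : ℝ} (ha : 0 < a) (hb : 0 < b) (k n : ℕ) :
    cc ((k:ℝ) * a + b) n ≤ ((k:ℝ)+1) ^ n * ((∏ i ∈ Finset.range n, (a + b + i)) / (Nat.factorial n : ℝ)) := by
  have hkb : 0 < (k:ℝ) * a + b := by positivity
  rw [cc_eq_prod hkb, mul_div_assoc', div_le_div_iff_of_pos_right (by positivity)]
  calc ∏ i ∈ Finset.range n, ((k:ℝ) * a + b + i)
      ≤ ∏ i ∈ Finset.range n, (((k:ℝ)+1) * (a + b + i)) := by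
        apply Finset.prod_le_prod
        · intro i _; positivity
        · intro i _
          have h1 : (0:ℝ) ≤ (i:ℝ) := Nat.cast_nonneg i
          have h2 : (0:ℝ) ≤ (k:ℝ) := Nat.cast_nonneg k
          nlinarith [ha.le, hb.le]
    _ = ((k:ℝ)+1) ^ n * ∏ i ∈ Finset.range n, (a + b + i) := by
        rw [Finset.prod_mul_distrib, Finset.prod_const, Finset.card_range]

noncomputable def Psi (a α b : ℝ) (n : ℕ) : ℝ := ∑' k : ℕ, α ^ k * cc ((k:ℝ) * a + b) n

section PsiLemmas
variable {a α : ℝ} (ha : 0 < a) (hα : |α| < 1)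
include ha hα

lemma psi_summable_pos {b : ℝ} (hb : 0 < b) (n : ℕ) :
    Summable (fun k : ℕ => α ^ k * cc ((k:ℝ) * a + b) n) := by
  rcases eq_or_ne α 0 with rfl | hα0
  · apply summable_of_ne_finset_zero (s := {0})
    intro k hk
    simp only [Finset.mem_singleton] at hk
    rw [zero_pow hk, zero_mul]
  · set C := (∏ i ∈ Finset.range n, (a + b + i)) / (Nat.factorial n : ℝ) with hC
    have hC0 : 0 ≤ C := by
      apply div_nonneg (Finset.prod_nonneg fun i _ => by positivity) (by positivity)
    have hsum : Summable (fun k : ℕ => ((k:ℝ)+1) ^ n * |α| ^ k * C) := by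
      apply Summable.mul_right
      have base := summable_pow_mul_geometric_of_norm_lt_one n (r := α) (by rwa [Real.norm_eq_abs])
      have babs : Summable (fun k : ℕ => (k:ℝ) ^ n * |α| ^ k) := by
        have := base.abs
        apply this.congr
        intro k
        simp [abs_mul, abs_pow, abs_of_nonneg (show (0:ℝ) ≤ (k:ℝ)^n by positivity)]
      have hshift : Summable (fun k : ℕ => ((k:ℝ)+1) ^ n * |α| ^ (k+1)) := by
        have := (summable_nat_add_iff 1).mpr babs
        apply this.congr
        intro k
        push_cast
        ring
      have := hshift.mul_left (|α|⁻¹)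
      apply this.congr
      intro k
      have : |α| ≠ 0 := by simpa using hα0
      field_simp
      ring
    apply Summable.of_norm_bounded hsum
    intro k
    have hkb : 0 < (k:ℝ) * a + b := by positivity
    rw [Real.norm_eq_abs, abs_mul, abs_pow, abs_of_nonneg (cc_nonneg hkb n)]
    calc |α| ^ k * cc ((k:ℝ) * a + b) n
        ≤ |α| ^ k * (((k:ℝ)+1) ^ n * C) := by
          apply mul_le_mul_of_nonneg_left (cc_le ha hb k n) (by positivity)
      _ = ((k:ℝ)+1) ^ n * |α| ^ k * C := by ring

lemma psi_summable (b : ℝ) (n : ℕ) :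
    Summable (fun k : ℕ => α ^ k * cc ((k:ℝ) * a + b) n) := by
  obtain ⟨K, hK⟩ := exists_nat_gt ((1 - b) / a)
  have hKb : 0 < (K:ℝ) * a + b := by
    rw [div_lt_iff₀ ha] at hK
    nlinarith
  have htail : Summable (fun k : ℕ => α ^ (k + K) * cc (((k + K : ℕ):ℝ) * a + b) n) := by
    have := (psi_summable_pos ha hα hKb n).mul_left (α ^ K)
    apply this.congr
    intro k
    push_cast
    rw [show (k:ℝ) * a + ((K:ℝ) * a + b) = ((k:ℝ) + (K:ℝ)) * a + b by ring, ← mul_assoc, ← pow_add]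
    ring_nf
  exact (summable_nat_add_iff K).mp htail

lemma psi_zero {b : ℝ} (hb : 0 < b) : Psi a α b 0 = (1 - α)⁻¹ := by
  have h : ∀ k : ℕ, α ^ k * cc ((k:ℝ) * a + b) 0 = α ^ k := by
    intro k
    rw [cc_zero (ne_of_gt (Real.Gamma_pos_of_pos (by positivity))), mul_one]
  rw [Psi, tsum_congr h, tsum_geometric_of_norm_lt_one (by rwa [Real.norm_eq_abs])]

lemma psi_tel (b : ℝ) (n : ℕ) : Psi a α b n - α * Psi a α (b + a) n = cc b n := by
  have h1 : α * Psi a α (b + a) n = ∑' k : ℕ, α ^ (k+1) * cc (((k+1 : ℕ):ℝ) * a + b) n := by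
    rw [Psi, ← tsum_mul_left]
    apply tsum_congr
    intro k
    push_cast
    rw [show ((k:ℝ) + 1) * a + b = (k:ℝ) * a + (b + a) by ring]
    ring
  rw [Psi, h1, Summable.tsum_eq_zero_add (psi_summable ha hα b n)]
  push_cast
  simp

lemma psi_pascal (b : ℝ) (n : ℕ) : Psi a α b (n+1) - Psi a α b n = Psi a α (b-1) (n+1) := by
  rw [Psi, Psi, Psi, ← Summable.tsum_sub (psi_summable ha hα b (n+1)) (psi_summable ha hα b n)]
  apply tsum_congr
  intro k
  rw [show (k:ℝ) * a + (b - 1) = ((k:ℝ) * a + b) - 1 by ring, ← cc_pascal]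
  ring

lemma psi_one {b : ℝ} (hb : 0 < b) : Psi a α b 1 = Psi a α 0 1 + b * Psi a α b 0 := by
  have h : ∀ k : ℕ, α ^ k * cc ((k:ℝ) * a + b) 1
      = α ^ k * cc ((k:ℝ) * a + 0) 1 + b * (α ^ k * cc ((k:ℝ) * a + b) 0) := by
    intro k
    have hkb : (0:ℝ) < (k:ℝ) * a + b := by positivity
    rw [cc_one hkb, cc_zero (ne_of_gt (Real.Gamma_pos_of_pos hkb)), add_zero]
    rcases Nat.eq_zero_or_pos k with rfl | hk
    · simp [cc, Real.Gamma_zero]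
    · have hka : (0:ℝ) < (k:ℝ) * a := by
        have : (0:ℝ) < (k:ℝ) := by exact_mod_cast hk
        positivity
      rw [cc_one hka]
      ring
  rw [Psi, tsum_congr h, Summable.tsum_add ((psi_summable ha hα 0 1)) (((psi_summable ha hα b 0)).mul_left b)]
  rw [Psi, Psi, tsum_mul_left]

lemma conv_psi {x y : ℝ} (hx : 0 < x) (hy : 0 < y) (m : ℕ) :
    ∑ j ∈ Finset.range (m+1), cc x (m - j) * Psi a α y j = Psi a α (x + y) m := by
  have swap : ∑ j ∈ Finset.range (m+1), cc x (m - j) * Psi a α y j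
      = ∑' k : ℕ, ∑ j ∈ Finset.range (m+1), cc x (m - j) * (α ^ k * cc ((k:ℝ) * a + y) j) := by
    rw [Summable.tsum_finsetSum (fun j _ => (psi_summable ha hα y j).mul_left (cc x (m - j)))]
    apply Finset.sum_congr rfl
    intro j _
    rw [Psi, ← tsum_mul_left]
  rw [swap, Psi]
  apply tsum_congr
  intro k
  have hky : 0 < (k:ℝ) * a + y := by positivity
  have vand := cc_vandermonde hx hky m
  rw [Finset.Nat.sum_antidiagonal_eq_sum_range_succ_mk] at vand
  calc ∑ j ∈ Finset.range (m+1), cc x (m - j) * (α ^ k * cc ((k:ℝ) * a + y) j)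
      = α ^ k * ∑ j ∈ Finset.range (m+1), cc x (m - j) * cc ((k:ℝ) * a + y) j := by
        rw [Finset.mul_sum]; apply Finset.sum_congr rfl; intro j _; ring
    _ = α ^ k * ∑ j ∈ Finset.range (m+1), cc x j * cc ((k:ℝ) * a + y) (m - j) := by
        congr 1
        rw [← Finset.sum_range_reflect (fun j => cc x j * cc ((k:ℝ)*a+y) (m - j)) (m+1)]
        apply Finset.sum_congr rfl
        intro j hj
        have hjm : j ≤ m := by
          simpa [Nat.lt_succ_iff] using Finset.mem_range.mp hj
        rw [show m + 1 - 1 - j = m - j by omega, show m - (m - j) = j by omega]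
    _ = α ^ k * cc (x + ((k:ℝ) * a + y)) m := by rw [← vand]
    _ = α ^ k * cc ((k:ℝ) * a + (x + y)) m := by ring_nf
end PsiLemmas

lemma gY_eq (ν : ℝ) (f : ℕ → ℝ) (t : ℕ) :
    gY ν f t = ∑ j ∈ Finset.range (t + 1), cc (2 - ν) (t - j) * f j := by
  rw [gY, Finset.mul_sum]
  apply Finset.sum_congr rfl
  intro j hj
  have hjt : j ≤ t := by simpa [Nat.lt_succ_iff] using Finset.mem_range.mp hj
  have hcast : ((t - j : ℕ) : ℝ) = (t : ℝ) - (j : ℝ) := by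
    push_cast [hjt]; ring
  rw [cc, ffact, hcast]
  rw [show (t:ℝ) - (j:ℝ) + (2 - ν) = (t:ℝ) + 1 - ν - (j:ℝ) + 1 by ring,
      show (t:ℝ) - (j:ℝ) + 1 = (t:ℝ) + 1 - ν - (j:ℝ) + 1 - (1 - ν) by ring]
  field_simp

lemma WY_eq (μ : ℝ) (f : ℕ → ℝ) (t : ℕ) :
    WY μ f t = ∑ j ∈ Finset.range (t + 1), cc (1 - μ) (t - j) * f (j + 1) := by
  rw [WY, Finset.mul_sum]
  apply Finset.sum_congr rfl
  intro j hj
  have hjt : j ≤ t := by simpa [Nat.lt_succ_iff] using Finset.mem_range.mp hj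
  have hcast : ((t - j : ℕ) : ℝ) = (t : ℝ) - (j : ℝ) := by
    push_cast [hjt]; ring
  rw [cc, ffact, hcast]
  rw [show (t:ℝ) - (j:ℝ) + (1 - μ) = (t:ℝ) - μ - (j:ℝ) + 1 by ring,
      show (t:ℝ) - (j:ℝ) + 1 = (t:ℝ) - μ - (j:ℝ) + 1 - (-μ) by ring]
  field_simp

lemma ml_nat (a b lam : ℝ) (n : ℕ) :
    mittagLeffler a b lam (n : ℤ) = ∑' k : ℕ, lam ^ k * cc ((k:ℝ) * a + b) n := by
  rw [mittagLeffler]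
  apply tsum_congr
  intro k
  rw [ffact, cc]
  push_cast
  rw [show (n:ℝ) + (k:ℝ) * a + b - 1 + 1 = (n:ℝ) + ((k:ℝ) * a + b) by ring]
  rw [show (n:ℝ) + ((k:ℝ) * a + b) - ((k:ℝ) * a + b - 1) = (n:ℝ) + 1 by ring]
  rw [mul_div_assoc, div_div]

lemma ml_neg_one (a b lam : ℝ) : mittagLeffler a b lam (-1) = 0 := by
  rw [mittagLeffler]
  convert tsum_zero with k
  rw [ffact]
  push_cast
  rw [show (-1:ℝ) + (k:ℝ) * a + b - 1 + 1 - ((k:ℝ) * a + b - 1) = 0 by ring,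
      Real.Gamma_zero, div_zero]
  simp

noncomputable def Rfun (a α ν : ℝ) : ℕ → ℝ
  | 0 => 0
  | (m+1) => Psi a α ν m

noncomputable def rho (a α ν x : ℝ) : ℕ → ℝ
  | 0 => 0
  | (s+1) => Psi a α (x + ν) s

lemma ml_R (μ ν α : ℝ) (m : ℕ) :
    mittagLeffler (ν - μ) ν α ((m : ℤ) - 1) = Rfun (ν - μ) α ν m := by
  match m with
  | 0 => simpa [Rfun] using ml_neg_one (ν - μ) ν α
  | (s+1) =>
      have : ((s + 1 : ℕ) : ℤ) - 1 = (s : ℤ) := by push_cast; ring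
      rw [this, ml_nat]
      rfl

lemma conv_R {a α ν x : ℝ} (ha : 0 < a) (hα : |α| < 1) (hν : 0 < ν) (hx : 0 < x) (m : ℕ) :
    ∑ j ∈ Finset.range (m+1), cc x (m - j) * Rfun a α ν j = rho a α ν x m := by
  match m with
  | 0 => simp [Rfun, rho]
  | (s+1) =>
      rw [Finset.sum_range_succ' (fun j => cc x (s + 1 - j) * Rfun a α ν j) (s+1)]
      simp only [Rfun, mul_zero, add_zero]
      rw [rho]
      rw [← conv_psi ha hα hx hν s]
      apply Finset.sum_congr rfl
      intro j _
      rw [show s + 1 - (j + 1) = s - j by omega]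

lemma conv_H {a α ν x : ℝ} (ha : 0 < a) (hα : |α| < 1) (hν : 0 < ν) (hx : 0 < x)
    (H : ℕ → ℝ) (m : ℕ) :
    ∑ j ∈ Finset.range (m+1), cc x (m - j) * (∑ i ∈ Finset.Icc 1 j, Rfun a α ν (j - i) * H i)
      = ∑ i ∈ Finset.Icc 1 m, rho a α ν x (m - i) * H i := by
  have step1 : ∀ j, cc x (m - j) * (∑ i ∈ Finset.Icc 1 j, Rfun a α ν (j - i) * H i)
      = ∑ i ∈ Finset.Icc 1 j, cc x (m - j) * Rfun a α ν (j - i) * H i := by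
    intro j
    rw [Finset.mul_sum]
    apply Finset.sum_congr rfl; intro i _; ring
  rw [Finset.sum_congr rfl (fun j _ => step1 j)]
  rw [Finset.sum_comm' (s := Finset.range (m+1)) (t := fun j => Finset.Icc 1 j)
      (t' := Finset.Icc 1 m) (s' := fun i => Finset.Icc i m)
      (by intro j i; simp only [Finset.mem_range, Finset.mem_Icc]; omega)]
  apply Finset.sum_congr rfl
  intro i hi
  have him : 1 ≤ i ∧ i ≤ m := by simpa using Finset.mem_Icc.mp hi
  have : ∑ j ∈ Finset.Icc i m, cc x (m - j) * Rfun a α ν (j - i) * H i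
      = (∑ j ∈ Finset.Icc i m, cc x (m - j) * Rfun a α ν (j - i)) * H i := by
    rw [Finset.sum_mul]
  rw [this]
  congr 1
  rw [show Finset.Icc i m = Finset.Ico i (m+1) by rw [Finset.Ico_add_one_right_eq_Icc]]
  rw [Finset.sum_Ico_eq_sum_range]
  rw [show m + 1 - i = (m - i) + 1 by omega]
  rw [← conv_R ha hα hν hx (m - i)]
  apply Finset.sum_congr rfl
  intro l hl
  have : l ≤ m - i := by simpa [Nat.lt_succ_iff] using Finset.mem_range.mp hl
  rw [show m - (i + l) = m - i - l by omega, show i + l - i = l by omega]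

noncomputable def Pfun (a α ν : ℝ) (n : ℕ) : ℝ :=
  Psi a α (ν-1) n + α*(1-ν)*Rfun a α ν n - α * Psi a α a n

noncomputable def Sfun (a α ν : ℝ) (Y H : ℕ → ℝ) (n : ℕ) : ℝ :=
  Pfun a α ν n * Y 0 + (1-α) * Rfun a α ν n * ((1-ν) * Y 0 + Y 1)
    - ∑ j ∈ Finset.Icc 1 n, Rfun a α ν (n-j) * H j

lemma conv_S {a α ν x : ℝ} (ha : 0 < a) (hα : |α| < 1) (hν : 1 < ν) (hx : 0 < x)
    (Y H : ℕ → ℝ) (m : ℕ) :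
    ∑ j ∈ Finset.range (m+1), cc x (m - j) * Sfun a α ν Y H j
      = (Psi a α (x+(ν-1)) m + α*(1-ν)*rho a α ν x m - α * Psi a α (x+a) m) * Y 0
        + (1-α) * rho a α ν x m * ((1-ν) * Y 0 + Y 1)
        - ∑ i ∈ Finset.Icc 1 m, rho a α ν x (m-i) * H i := by
  have hν0 : 0 < ν := by linarith
  have h1 := conv_psi ha hα hx (by linarith : (0:ℝ) < ν - 1) m
  have h3 := conv_psi ha hα hx ha m
  have h2 := conv_R (ν := ν) ha hα hν0 hx m
  have h4 := conv_H (ν := ν) ha hα hν0 hx H m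
  calc ∑ j ∈ Finset.range (m+1), cc x (m - j) * Sfun a α ν Y H j
      = ∑ j ∈ Finset.range (m+1),
          ((cc x (m - j) * Psi a α (ν-1) j) * Y 0
            + (α*(1-ν)*Y 0 + (1-α)*((1-ν) * Y 0 + Y 1)) * (cc x (m - j) * Rfun a α ν j)
            - (α * Y 0) * (cc x (m - j) * Psi a α a j)
            - cc x (m - j) * (∑ i ∈ Finset.Icc 1 j, Rfun a α ν (j-i) * H i)) := by
        apply Finset.sum_congr rfl
        intro j _
        rw [Sfun, Pfun]
        ring
    _ = (∑ j ∈ Finset.range (m+1), cc x (m - j) * Psi a α (ν-1) j) * Y 0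
          + (α*(1-ν)*Y 0 + (1-α)*((1-ν) * Y 0 + Y 1))
              * (∑ j ∈ Finset.range (m+1), cc x (m - j) * Rfun a α ν j)
          - (α * Y 0) * (∑ j ∈ Finset.range (m+1), cc x (m - j) * Psi a α a j)
          - ∑ j ∈ Finset.range (m+1),
              cc x (m - j) * (∑ i ∈ Finset.Icc 1 j, Rfun a α ν (j-i) * H i) := by
        rw [Finset.sum_sub_distrib, Finset.sum_sub_distrib, Finset.sum_add_distrib,
          ← Finset.sum_mul, ← Finset.mul_sum, ← Finset.mul_sum]
    _ = _ := by
        rw [h1, h2, h3, h4]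
        ring

lemma rho_diff {a α ν x : ℝ} (ha : 0 < a) (hα : |α| < 1) (s : ℕ) :
    rho a α ν x (s+2) - rho a α ν x (s+1) = Psi a α (x+ν-1) (s+1) := by
  show Psi a α (x+ν) (s+1) - Psi a α (x+ν) s = _
  rw [psi_pascal ha hα (x+ν) s, show x + ν - 1 = (x+ν) - 1 by ring]

lemma rho_ddiff {a α ν x : ℝ} (ha : 0 < a) (hα : |α| < 1) (hxν : 0 < x + ν - 1) (t : ℕ) :
    rho a α ν x (t+2) - 2 * rho a α ν x (t+1) + rho a α ν x t
      = Psi a α (x+ν-2) (t+1) := by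
  match t with
  | 0 =>
      show Psi a α (x+ν) 1 - 2 * Psi a α (x+ν) 0 + 0 = _
      have e1 : Psi a α (x+ν) 1 - Psi a α (x+ν) 0 = Psi a α (x+ν-1) 1 := by
        rw [psi_pascal ha hα (x+ν) 0, show x + ν - 1 = (x+ν) - 1 by ring]
      have e2 : Psi a α (x+ν-1) 1 - Psi a α (x+ν-1) 0 = Psi a α (x+ν-2) 1 := by
        rw [psi_pascal ha hα (x+ν-1) 0, show x + ν - 2 = (x+ν-1) - 1 by ring]
      have e3 : Psi a α (x+ν-1) 0 = Psi a α (x+ν) 0 := by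
        rw [psi_zero ha hα hxν, psi_zero ha hα (by linarith : (0:ℝ) < x + ν)]
      linarith
  | (s+1) =>
      have d1 := rho_diff (ν := ν) (x := x) ha hα (s+1)
      have d2 := rho_diff (ν := ν) (x := x) ha hα s
      have e : Psi a α (x+ν-1) (s+2) - Psi a α (x+ν-1) (s+1) = Psi a α (x+ν-2) (s+2) := by
        rw [psi_pascal ha hα (x+ν-1) (s+1), show x + ν - 2 = (x+ν-1) - 1 by ring]
      have : rho a α ν x (s+1+2) - 2 * rho a α ν x (s+1+1) + rho a α ν x (s+1)
          = (rho a α ν x (s+3) - rho a α ν x (s+2))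
            - (rho a α ν x (s+2) - rho a α ν x (s+1)) := by ring
      rw [this, show s+1+2 = s+3 from rfl] at *
      rw [show s+2+1 = s+3 from rfl] at d1
      rw [d1, d2, e]

lemma cc_zero_param (n : ℕ) : cc 0 n = 0 := cc_of_gamma_zero Real.Gamma_zero n

lemma core_identity {μ ν α : ℝ} (hμ0 : 0 < μ) (hμ1 : μ < 1) (hν1 : 1 < ν) (hν2 : ν < 2)
    (hα : |α| < 1) (t : ℕ) :
    rho (ν-μ) α ν (2-ν) (t+2) - 2 * rho (ν-μ) α ν (2-ν) (t+1) + rho (ν-μ) α ν (2-ν) t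
      - α * (rho (ν-μ) α ν (1-μ) (t+2) - rho (ν-μ) α ν (1-μ) (t+1)) = 0 := by
  have ha : (0:ℝ) < ν - μ := by linarith
  rw [rho_ddiff ha hα (by linarith : (0:ℝ) < (2-ν) + ν - 1) t,
      rho_diff ha hα t]
  rw [show (2-ν) + ν - 2 = (0:ℝ) by ring, show (1-μ) + ν - 1 = 0 + (ν-μ) by ring]
  rw [psi_tel ha hα 0 (t+1), cc_zero_param]

section Coef
variable {μ ν α : ℝ}

lemma y0_coef (hμ0 : 0 < μ) (hμ1 : μ < 1) (hν1 : 1 < ν) (hν2 : ν < 2) (hα : |α| < 1) (t : ℕ) :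
    -(Psi (ν-μ) α 1 (t+2) - 2*Psi (ν-μ) α 1 (t+1) + Psi (ν-μ) α 1 t)
      - α*(1-ν)*(rho (ν-μ) α ν (2-ν) (t+2) - 2*rho (ν-μ) α ν (2-ν) (t+1) + rho (ν-μ) α ν (2-ν) t)
      + α*(Psi (ν-μ) α (2-μ) (t+2) - 2*Psi (ν-μ) α (2-μ) (t+1) + Psi (ν-μ) α (2-μ) t)
      + α*(Psi (ν-μ) α (ν-μ) (t+2) - Psi (ν-μ) α (ν-μ) (t+1))
      + α^2*(1-ν)*(rho (ν-μ) α ν (1-μ) (t+2) - rho (ν-μ) α ν (1-μ) (t+1))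
      - α^2*(Psi (ν-μ) α (1-μ+(ν-μ)) (t+2) - Psi (ν-μ) α (1-μ+(ν-μ)) (t+1))
      - α*(cc (1-μ) (t+2) - cc (1-μ) (t+1)) = 0 := by
  have ha : (0:ℝ) < ν - μ := by linarith
  have h1 := psi_pascal ha hα 1 (t+1)
  have h2 := psi_pascal ha hα 1 t
  have h3 := psi_pascal ha hα 0 (t+1)
  rw [show (1:ℝ)-1 = 0 by norm_num] at h1 h2
  rw [show (0:ℝ)-1 = -1 by norm_num] at h3
  have hA : Psi (ν-μ) α 1 (t+2) - 2*Psi (ν-μ) α 1 (t+1) + Psi (ν-μ) α 1 t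
      = Psi (ν-μ) α (-1) (t+2) := by
    have e : Psi (ν-μ) α 1 (t+1+1) - Psi (ν-μ) α 1 (t+1) = Psi (ν-μ) α 0 (t+1+1) := h1
    have e3 : Psi (ν-μ) α 0 (t+1+1) - Psi (ν-μ) α 0 (t+1) = Psi (ν-μ) α (-1) (t+1+1) := h3
    have e2 : Psi (ν-μ) α 1 (t+1) - Psi (ν-μ) α 1 t = Psi (ν-μ) α 0 (t+1) := h2
    have ht : t+1+1 = t+2 := rfl
    rw [ht] at e e3
    linarith
  have hB : rho (ν-μ) α ν (2-ν) (t+2) - 2*rho (ν-μ) α ν (2-ν) (t+1) + rho (ν-μ) α ν (2-ν) t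
      = Psi (ν-μ) α 0 (t+1) := by
    have := rho_ddiff (ν := ν) (x := 2-ν) ha hα (by linarith) t
    rwa [show (2-ν) + ν - 2 = (0:ℝ) by ring] at this
  have g1 := psi_pascal ha hα (2-μ) (t+1)
  have g2 := psi_pascal ha hα (2-μ) t
  have g3 := psi_pascal ha hα (1-μ) (t+1)
  rw [show (2-μ)-1 = 1-μ by ring] at g1 g2
  rw [show (1-μ)-1 = -μ by ring] at g3
  have hC : Psi (ν-μ) α (2-μ) (t+2) - 2*Psi (ν-μ) α (2-μ) (t+1) + Psi (ν-μ) α (2-μ) t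
      = Psi (ν-μ) α (-μ) (t+2) := by
    have e : Psi (ν-μ) α (2-μ) (t+1+1) - Psi (ν-μ) α (2-μ) (t+1) = Psi (ν-μ) α (1-μ) (t+1+1) := g1
    have e3 : Psi (ν-μ) α (1-μ) (t+1+1) - Psi (ν-μ) α (1-μ) (t+1) = Psi (ν-μ) α (-μ) (t+1+1) := g3
    have e2 : Psi (ν-μ) α (2-μ) (t+1) - Psi (ν-μ) α (2-μ) t = Psi (ν-μ) α (1-μ) (t+1) := g2
    have ht : t+1+1 = t+2 := rfl
    rw [ht] at e e3
    linarith
  have hD : Psi (ν-μ) α (ν-μ) (t+2) - Psi (ν-μ) α (ν-μ) (t+1) = Psi (ν-μ) α (ν-μ-1) (t+2) := by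
    have := psi_pascal ha hα (ν-μ) (t+1)
    rwa [show (ν-μ)-1 = ν-μ-1 by ring] at this
  have hE : rho (ν-μ) α ν (1-μ) (t+2) - rho (ν-μ) α ν (1-μ) (t+1) = Psi (ν-μ) α (ν-μ) (t+1) := by
    have := rho_diff (ν := ν) (x := 1-μ) ha hα t
    rwa [show (1-μ) + ν - 1 = ν-μ by ring] at this
  have hF : Psi (ν-μ) α (1-μ+(ν-μ)) (t+2) - Psi (ν-μ) α (1-μ+(ν-μ)) (t+1)
      = Psi (ν-μ) α (ν-2*μ) (t+2) := by
    have := psi_pascal ha hα (1-μ+(ν-μ)) (t+1)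
    rwa [show (1-μ+(ν-μ))-1 = ν-2*μ by ring] at this
  have hK : cc (1-μ) (t+2) - cc (1-μ) (t+1) = cc (-μ) (t+2) := by
    have := cc_pascal (1-μ) (t+1)
    rwa [show (1-μ)-1 = -μ by ring] at this
  have hGm1 : Real.Gamma (-1 : ℝ) = 0 := by
    rw [Real.Gamma_eq_zero_iff]; exact ⟨1, by norm_num⟩
  have hT1 : Psi (ν-μ) α (-1) (t+2) = α * Psi (ν-μ) α (ν-μ-1) (t+2) := by
    have := psi_tel ha hα (-1) (t+2)
    rw [show (-1:ℝ) + (ν-μ) = ν-μ-1 by ring, cc_of_gamma_zero hGm1] at this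
    linarith
  have hT2 : Psi (ν-μ) α 0 (t+1) = α * Psi (ν-μ) α (ν-μ) (t+1) := by
    have := psi_tel ha hα 0 (t+1)
    rw [show (0:ℝ) + (ν-μ) = ν-μ by ring, cc_zero_param] at this
    linarith
  have hT3 : Psi (ν-μ) α (-μ) (t+2) - α * Psi (ν-μ) α (ν-2*μ) (t+2) = cc (-μ) (t+2) := by
    have := psi_tel ha hα (-μ) (t+2)
    rwa [show (-μ) + (ν-μ) = ν-2*μ by ring] at this
  linear_combination (-1 : ℝ) * hA - α*(1-ν)*hB + α*hC + α*hD + α^2*(1-ν)*hE - α^2*hF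
    - α*hK - hT1 - α*(1-ν)*hT2 + α*hT3

lemma y1_coef (hμ0 : 0 < μ) (hμ1 : μ < 1) (hν1 : 1 < ν) (hν2 : ν < 2) (hα : |α| < 1) (t : ℕ) :
    -((1-α)*(rho (ν-μ) α ν (2-ν) (t+2) - 2*rho (ν-μ) α ν (2-ν) (t+1) + rho (ν-μ) α ν (2-ν) t))
      + α*(1-α)*(rho (ν-μ) α ν (1-μ) (t+2) - rho (ν-μ) α ν (1-μ) (t+1)) = 0 := by
  have ha : (0:ℝ) < ν - μ := by linarith
  have hB : rho (ν-μ) α ν (2-ν) (t+2) - 2*rho (ν-μ) α ν (2-ν) (t+1) + rho (ν-μ) α ν (2-ν) t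
      = Psi (ν-μ) α 0 (t+1) := by
    have := rho_ddiff (ν := ν) (x := 2-ν) ha hα (by linarith) t
    rwa [show (2-ν) + ν - 2 = (0:ℝ) by ring] at this
  have hE : rho (ν-μ) α ν (1-μ) (t+2) - rho (ν-μ) α ν (1-μ) (t+1) = Psi (ν-μ) α (ν-μ) (t+1) := by
    have := rho_diff (ν := ν) (x := 1-μ) ha hα t
    rwa [show (1-μ) + ν - 1 = ν-μ by ring] at this
  have hT2 : Psi (ν-μ) α 0 (t+1) = α * Psi (ν-μ) α (ν-μ) (t+1) := by
    have := psi_tel ha hα 0 (t+1)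
    rw [show (0:ℝ) + (ν-μ) = ν-μ by ring, cc_zero_param] at this
    linarith
  linear_combination (-(1-α)) * hB + α*(1-α)*hE - (1-α)*hT2

end Coef

lemma conv_shift (g f : ℕ → ℝ) (m : ℕ) :
    ∑ j ∈ Finset.range (m+1), g (m - j) * f (j+1)
      = ∑ j ∈ Finset.range (m+2), g (m+1-j) * f j - g (m+1) * f 0 := by
  rw [Finset.sum_range_succ' (fun j => g (m+1-j) * f j) (m+1)]
  simp only [Nat.succ_sub_succ_eq_sub, Nat.sub_zero]
  ring

lemma S_zero {a α ν : ℝ} (ha : 0 < a) (hα : |α| < 1) (hν1 : 1 < ν) (Y H : ℕ → ℝ) :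
    Sfun a α ν Y H 0 = Y 0 := by
  have h1α : (1:ℝ) - α ≠ 0 := by
    have := abs_lt.mp hα
    intro h; linarith
  rw [Sfun, Pfun]
  show (Psi a α (ν-1) 0 + α*(1-ν)* 0 - α * Psi a α a 0) * Y 0 + (1-α) * 0 * _ - _ = Y 0
  rw [psi_zero ha hα (by linarith : (0:ℝ) < ν - 1), psi_zero ha hα ha]
  simp
  field_simp

lemma sum_ext {a α ν x : ℝ} (H : ℕ → ℝ) (u v : ℕ) (huv : u ≤ v) :
    ∑ i ∈ Finset.Icc 1 u, rho a α ν x (u - i) * H i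
      = ∑ i ∈ Finset.Icc 1 v, rho a α ν x (u - i) * H i := by
  apply Finset.sum_subset (Finset.Icc_subset_Icc_right huv)
  intro i hi hni
  have h1 : 1 ≤ i := (Finset.mem_Icc.mp hi).1
  have h2 : u < i := by
    by_contra h
    exact hni (Finset.mem_Icc.mp hi |> fun _ => Finset.mem_Icc.mpr ⟨h1, by omega⟩)
  rw [show u - i = 0 by omega]
  show (0:ℝ) * H i = 0
  ring

lemma rho_one {a α ν x : ℝ} (ha : 0 < a) (hα : |α| < 1) (hxν : 0 < x + ν) :
    rho a α ν x 1 = (1-α)⁻¹ := by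
  show Psi a α (x+ν) 0 = _
  exact psi_zero ha hα hxν

lemma hcoef_eval {μ ν α : ℝ} (hμ0 : 0 < μ) (hμ1 : μ < 1) (hν1 : 1 < ν) (hν2 : ν < 2)
    (hα : |α| < 1) (H : ℕ → ℝ) (t : ℕ) :
    ∑ i ∈ Finset.Icc 1 (t+2),
      (rho (ν-μ) α ν (2-ν) (t+2-i) - 2*rho (ν-μ) α ν (2-ν) (t+1-i) + rho (ν-μ) α ν (2-ν) (t-i)
        - α*(rho (ν-μ) α ν (1-μ) (t+2-i) - rho (ν-μ) α ν (1-μ) (t+1-i))) * H i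
      = H (t+1) := by
  have ha : (0:ℝ) < ν - μ := by linarith
  have h1α : (1:ℝ) - α ≠ 0 := by
    have := abs_lt.mp hα; intro h; linarith
  have heval : ∀ i ∈ Finset.Icc 1 (t+2),
      (rho (ν-μ) α ν (2-ν) (t+2-i) - 2*rho (ν-μ) α ν (2-ν) (t+1-i) + rho (ν-μ) α ν (2-ν) (t-i)
        - α*(rho (ν-μ) α ν (1-μ) (t+2-i) - rho (ν-μ) α ν (1-μ) (t+1-i))) * H i
      = if i = t+1 then H i else 0 := by
    intro i hi
    obtain ⟨hi1, hi2⟩ := Finset.mem_Icc.mp hi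
    rcases lt_trichotomy i (t+1) with hlt | heq | hgt
    · rw [if_neg (by omega)]
      have e2 : t+2-i = (t-i)+2 := by omega
      have e1 : t+1-i = (t-i)+1 := by omega
      rw [e2, e1, core_identity hμ0 hμ1 hν1 hν2 hα (t-i), zero_mul]
    · rw [if_pos heq]
      rw [show t+2-i = 1 by omega, show t+1-i = 0 by omega, show t-i = 0 by omega]
      rw [rho_one ha hα (by linarith : (0:ℝ) < (2-ν) + ν),
          rho_one ha hα (by linarith : (0:ℝ) < (1-μ) + ν)]
      show ((1-α)⁻¹ - 2*0 + 0 - α*((1-α)⁻¹ - 0)) * H i = H i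
      field_simp
      ring
    · rw [if_neg (by omega)]
      rw [show t+2-i = 0 by omega, show t+1-i = 0 by omega, show t-i = 0 by omega]
      show ((0:ℝ) - 2*0 + 0 - α*(0 - 0)) * H i = 0
      ring
  rw [Finset.sum_congr rfl heval, Finset.sum_ite_eq' (Finset.Icc 1 (t+2)) (t+1) H,
      if_pos (Finset.mem_Icc.mpr ⟨by omega, by omega⟩)]

lemma S_one {μ ν α : ℝ} (hμ0 : 0 < μ) (hμ1 : μ < 1) (hν1 : 1 < ν) (hν2 : ν < 2)
    (hα : |α| < 1) (Y H : ℕ → ℝ) : Sfun (ν-μ) α ν Y H 1 = Y 1 := by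
  have ha : (0:ℝ) < ν - μ := by linarith
  have h1α : (1:ℝ) - α ≠ 0 := by
    have := abs_lt.mp hα; intro h; linarith
  have hR1 : Rfun (ν-μ) α ν 1 = (1-α)⁻¹ := by
    show Psi (ν-μ) α ν 0 = _
    exact psi_zero ha hα (by linarith)
  have hP1 : Pfun (ν-μ) α ν 1 = ν - 1 := by
    rw [Pfun, hR1]
    have e1 : Psi (ν-μ) α (ν-1) 1 = Psi (ν-μ) α 0 1 + (ν-1) * Psi (ν-μ) α (ν-1) 0 :=
      psi_one ha hα (by linarith : (0:ℝ) < ν-1)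
    have e2 : Psi (ν-μ) α 0 1 - α * Psi (ν-μ) α (ν-μ) 1 = 0 := by
      have := psi_tel ha hα 0 1
      rwa [show (0:ℝ) + (ν-μ) = ν-μ by ring, cc_zero_param] at this
    rw [e1, psi_zero ha hα (by linarith : (0:ℝ) < ν-1)]
    field_simp
    linear_combination (1-α) * e2
  rw [Sfun, hP1, hR1]
  have : ∑ j ∈ Finset.Icc 1 1, Rfun (ν-μ) α ν (1-j) * H j = 0 := by
    rw [Finset.Icc_self, Finset.sum_singleton]
    show (0:ℝ) * H 1 = 0
    ring
  rw [this]
  field_simp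
  ring

lemma key_identity {μ ν α : ℝ} (hμ0 : 0 < μ) (hμ1 : μ < 1) (hν1 : 1 < ν) (hν2 : ν < 2)
    (hα : |α| < 1) (Y H : ℕ → ℝ) (t : ℕ) :
    -(gY ν (Sfun (ν-μ) α ν Y H) (t+2) - 2 * gY ν (Sfun (ν-μ) α ν Y H) (t+1)
        + gY ν (Sfun (ν-μ) α ν Y H) t)
      + α * (WY μ (Sfun (ν-μ) α ν Y H) (t+1) - WY μ (Sfun (ν-μ) α ν Y H) t) = H (t+1) := by
  have ha : (0:ℝ) < ν - μ := by linarith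
  have hx1 : (0:ℝ) < 2 - ν := by linarith
  have hx2 : (0:ℝ) < 1 - μ := by linarith
  -- gY side
  have hg : ∀ m : ℕ, gY ν (Sfun (ν-μ) α ν Y H) m
      = (Psi (ν-μ) α ((2-ν)+(ν-1)) m + α*(1-ν)*rho (ν-μ) α ν (2-ν) m
          - α * Psi (ν-μ) α ((2-ν)+(ν-μ)) m) * Y 0
        + (1-α) * rho (ν-μ) α ν (2-ν) m * ((1-ν) * Y 0 + Y 1)
        - ∑ i ∈ Finset.Icc 1 m, rho (ν-μ) α ν (2-ν) (m-i) * H i := by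
    intro m
    rw [gY_eq, conv_S ha hα hν1 hx1]
  have hw : ∀ m : ℕ, WY μ (Sfun (ν-μ) α ν Y H) m
      = (Psi (ν-μ) α ((1-μ)+(ν-1)) (m+1) + α*(1-ν)*rho (ν-μ) α ν (1-μ) (m+1)
          - α * Psi (ν-μ) α ((1-μ)+(ν-μ)) (m+1)) * Y 0
        + (1-α) * rho (ν-μ) α ν (1-μ) (m+1) * ((1-ν) * Y 0 + Y 1)
        - ∑ i ∈ Finset.Icc 1 (m+1), rho (ν-μ) α ν (1-μ) (m+1-i) * H i
        - cc (1-μ) (m+1) * Y 0 := by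
    intro m
    rw [WY_eq, conv_shift (cc (1-μ)) (Sfun (ν-μ) α ν Y H) m,
      conv_S ha hα hν1 hx2 Y H (m+1), S_zero ha hα hν1 Y H]
  rw [hg (t+2), hg (t+1), hg t, hw (t+1), hw t]
  rw [show (2-ν)+(ν-1) = (1:ℝ) by ring, show (2-ν)+(ν-μ) = 2-μ by ring,
      show (1-μ)+(ν-1) = ν-μ by ring]
  -- extend the H-sums to Icc 1 (t+2)
  rw [sum_ext (a := ν-μ) (ν := ν) (x := 2-ν) H (t+1) (t+2) (by omega),
      sum_ext (a := ν-μ) (ν := ν) (x := 2-ν) H t (t+2) (by omega),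
      sum_ext (a := ν-μ) (ν := ν) (x := 1-μ) H (t+1) (t+2) (by omega)]
  -- the combined H-sum
  have hsplit : ∑ i ∈ Finset.Icc 1 (t+2),
      (rho (ν-μ) α ν (2-ν) (t+2-i) - 2*rho (ν-μ) α ν (2-ν) (t+1-i) + rho (ν-μ) α ν (2-ν) (t-i)
        - α*(rho (ν-μ) α ν (1-μ) (t+2-i) - rho (ν-μ) α ν (1-μ) (t+1-i))) * H i
      = (∑ i ∈ Finset.Icc 1 (t+2), rho (ν-μ) α ν (2-ν) (t+2-i) * H i)
        - 2 * (∑ i ∈ Finset.Icc 1 (t+2), rho (ν-μ) α ν (2-ν) (t+1-i) * H i)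
        + (∑ i ∈ Finset.Icc 1 (t+2), rho (ν-μ) α ν (2-ν) (t-i) * H i)
        - α * (∑ i ∈ Finset.Icc 1 (t+2), rho (ν-μ) α ν (1-μ) (t+2-i) * H i)
        + α * (∑ i ∈ Finset.Icc 1 (t+2), rho (ν-μ) α ν (1-μ) (t+1-i) * H i) := by
    rw [Finset.sum_congr rfl (fun i _ => by
      show _ = rho (ν-μ) α ν (2-ν) (t+2-i) * H i - 2*(rho (ν-μ) α ν (2-ν) (t+1-i) * H i)
        + rho (ν-μ) α ν (2-ν) (t-i) * H i - α*(rho (ν-μ) α ν (1-μ) (t+2-i) * H i)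
        + α*(rho (ν-μ) α ν (1-μ) (t+1-i) * H i)
      ring)]
    simp only [Finset.sum_add_distrib, Finset.sum_sub_distrib, ← Finset.mul_sum]
  have hH : (∑ i ∈ Finset.Icc 1 (t+2), rho (ν-μ) α ν (2-ν) (t+2-i) * H i)
        - 2 * (∑ i ∈ Finset.Icc 1 (t+2), rho (ν-μ) α ν (2-ν) (t+1-i) * H i)
        + (∑ i ∈ Finset.Icc 1 (t+2), rho (ν-μ) α ν (2-ν) (t-i) * H i)
        - α * (∑ i ∈ Finset.Icc 1 (t+2), rho (ν-μ) α ν (1-μ) (t+2-i) * H i)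
        + α * (∑ i ∈ Finset.Icc 1 (t+2), rho (ν-μ) α ν (1-μ) (t+1-i) * H i) = H (t+1) := by
    rw [← hsplit]
    exact hcoef_eval hμ0 hμ1 hν1 hν2 hα H t
  linear_combination Y 0 * (y0_coef hμ0 hμ1 hν1 hν2 hα t)
    + ((1-ν) * Y 0 + Y 1) * (y1_coef hμ0 hμ1 hν1 hν2 hα t) + hH

lemma ml_psi (a b lam : ℝ) (n : ℕ) : mittagLeffler a b lam (n : ℤ) = Psi a lam b n := by
  rw [ml_nat]; rfl

/-- General solution representation of the implicit fractional difference equation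
`-Δ^ν y(t) + α Δ^μ y(t+ν-μ) = h(t+ν-1)`: if `H(t+1) = -(g_Y(t+2) - 2g_Y(t+1) + g_Y(t))
+ α(W_Y(t+1) - W_Y(t))` for all `t ∈ ℕ`, then for every `n`,
`Y(n) = [e_{ν-μ,ν-1}(α,n) + α(1-ν) e_{ν-μ,ν}(α,n-1) - α e_{ν-μ,ν-μ}(α,n)] Y(0)
  + (1-α) e_{ν-μ,ν}(α,n-1) ((1-ν)Y(0) + Y(1)) - ∑_{j=1}^{n} e_{ν-μ,ν}(α,n-j-1) H(j)`. -/
theorem general_solution_representation (μ ν α : ℝ)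
    (hμ0 : 0 < μ) (hμ1 : μ < 1) (hν1 : 1 < ν) (hν2 : ν < 2) (hα : |α| < 1)
    (Y : ℕ → ℝ) (hY : ∃ M : ℝ, ∀ n : ℕ, |Y n| ≤ M) (H : ℕ → ℝ)
    (hH : ∀ t : ℕ, H (t + 1) =
      -(gY ν Y (t + 2) - 2 * gY ν Y (t + 1) + gY ν Y t) + α * (WY μ Y (t + 1) - WY μ Y t)) :
    ∀ n : ℕ,
      Y n = (mittagLeffler (ν - μ) (ν - 1) α (n : ℤ)
              + α * (1 - ν) * mittagLeffler (ν - μ) ν α ((n : ℤ) - 1)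
              - α * mittagLeffler (ν - μ) (ν - μ) α (n : ℤ)) * Y 0
            + (1 - α) * mittagLeffler (ν - μ) ν α ((n : ℤ) - 1) * ((1 - ν) * Y 0 + Y 1)
            - ∑ j ∈ Finset.Icc 1 n, mittagLeffler (ν - μ) ν α ((n : ℤ) - (j : ℤ) - 1) * H j := by
  have ha : (0:ℝ) < ν - μ := by linarith
  have hαne1 : α - 1 ≠ 0 := by
    have := abs_lt.mp hα; intro h; linarith
  have hΓx1 : Real.Gamma (2 - ν) ≠ 0 := ne_of_gt (Real.Gamma_pos_of_pos (by linarith))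
  have hΓx2 : Real.Gamma (1 - μ) ≠ 0 := ne_of_gt (Real.Gamma_pos_of_pos (by linarith))
  -- main claim: Y agrees with Sfun
  have main : ∀ n : ℕ, Y n = Sfun (ν-μ) α ν Y H n := by
    intro n
    induction n using Nat.strong_induction_on with
    | _ n ih =>
      match n with
      | 0 => exact (S_zero ha hα hν1 Y H).symm
      | 1 => exact (S_one hμ0 hμ1 hν1 hν2 hα Y H).symm
      | (t+2) =>
          have E1 := (hH t).symm
          have E2 := key_identity hμ0 hμ1 hν1 hν2 hα Y H t
          set S : ℕ → ℝ := Sfun (ν-μ) α ν Y H with hSdef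
          have hgen : ∀ m : ℕ, m ≤ t + 1 →
              gY ν Y m = gY ν S m := by
            intro m hm
            rw [gY_eq, gY_eq]
            apply Finset.sum_congr rfl
            intro j hj
            have : j < m + 1 := Finset.mem_range.mp hj
            rw [ih j (by omega)]
          have c1 := hgen (t+1) (by omega)
          have c0 := hgen t (by omega)
          have c2 : gY ν Y (t+2) - gY ν S (t+2) = Y (t+2) - S (t+2) := by
            rw [gY_eq, gY_eq,
              Finset.sum_range_succ (fun j => cc (2-ν) (t+2-j) * Y j) (t+2),
              Finset.sum_range_succ (fun j => cc (2-ν) (t+2-j) * S j) (t+2)]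
            have hsum : ∑ j ∈ Finset.range (t+2), cc (2-ν) (t+2-j) * Y j
                = ∑ j ∈ Finset.range (t+2), cc (2-ν) (t+2-j) * S j := by
              apply Finset.sum_congr rfl
              intro j hj
              have : j < t + 2 := Finset.mem_range.mp hj
              rw [ih j (by omega)]
            rw [hsum, Nat.sub_self, cc_zero hΓx1]
            ring
          have d0 : WY μ Y t = WY μ S t := by
            rw [WY_eq, WY_eq]
            apply Finset.sum_congr rfl
            intro j hj
            have : j < t + 1 := Finset.mem_range.mp hj
            rw [ih (j+1) (by omega)]
          have d1 : WY μ Y (t+1) - WY μ S (t+1) = Y (t+2) - S (t+2) := by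
            rw [WY_eq, WY_eq,
              Finset.sum_range_succ (fun j => cc (1-μ) (t+1-j) * Y (j+1)) (t+1),
              Finset.sum_range_succ (fun j => cc (1-μ) (t+1-j) * S (j+1)) (t+1)]
            have hsum : ∑ j ∈ Finset.range (t+1), cc (1-μ) (t+1-j) * Y (j+1)
                = ∑ j ∈ Finset.range (t+1), cc (1-μ) (t+1-j) * S (j+1) := by
              apply Finset.sum_congr rfl
              intro j hj
              have : j < t + 1 := Finset.mem_range.mp hj
              rw [ih (j+1) (by omega)]
            rw [hsum, Nat.sub_self, cc_zero hΓx2]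
            ring
          have hzero : (α - 1) * (Y (t+2) - S (t+2)) = 0 := by
            linear_combination E1 - E2 + c2 - 2 * c1 + c0 - α * d1 + α * d0
          have := mul_eq_zero.mp hzero
          rcases this with h | h
          · exact absurd h hαne1
          · linarith [h]
  intro n
  have hml3 : ∀ j ∈ Finset.Icc 1 n,
      mittagLeffler (ν-μ) ν α ((n:ℤ) - (j:ℤ) - 1) * H j = Rfun (ν-μ) α ν (n-j) * H j := by
    intro j hj
    have hj' : j ≤ n := (Finset.mem_Icc.mp hj).2
    have hcast : (n:ℤ) - (j:ℤ) - 1 = ((n - j : ℕ) : ℤ) - 1 := by omega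
    rw [hcast, ml_R]
  rw [main n, ml_psi, ml_psi, ml_R, Finset.sum_congr rfl hml3]
  rfl
end

section
/- Let 0 < μ < 1 < ν < 2, let α be real with |α| < 1, and let b ∈ ℕ. Then the Dirichlet boundary value problem -Δ^ν y(t) + α Δ^μ y(t+ν-μ) = h(t+ν-1) for t ∈ {0, 1, ..., b+1}, with y(ν-2) = y(ν+b+1) = 0, has a unique solution for every right-hand side (i.e., for every H : {1, ..., b+2} → ℝ there exists a unique Y : {0, 1, ..., b+3} → ℝ with Y(0) = Y(b+3) = 0 satisfying -(g_Y(t+2) - 2 g_Y(t+1) + g_Y(t)) + α(W_Y(t+1) - W_Y(t)) = H(t+1) for all t ∈ {0, ..., b+1}) if and only if e_{ν-μ,ν}(α, b+2) ≠ 0. -/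
set_option linter.unusedVariables false
set_option linter.unusedSectionVars false

noncomputable def Bc (x : ℝ) (n : ℕ) : ℝ :=
  Polynomial.eval x (ascPochhammer ℝ n) / n.factorial

lemma Bc_zero (x : ℝ) : Bc x 0 = 1 := by simp [Bc]

lemma Bc_succ (x : ℝ) (n : ℕ) :
    ((n : ℝ) + 1) * Bc x (n + 1) = (x + n) * Bc x n := by
  have h : ((n + 1).factorial : ℝ) = ((n : ℝ) + 1) * n.factorial := by
    push_cast [Nat.factorial_succ]; ring
  have hn : (n.factorial : ℝ) ≠ 0 := by positivity
  have hn1 : ((n : ℝ) + 1) ≠ 0 := by positivity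
  simp only [Bc]
  rw [ascPochhammer_succ_eval, h]
  field_simp [Bc, ascPochhammer_succ_eval, h]

lemma Bc_one_arg (x : ℝ) : Bc x 1 = x := by
  simp [Bc, ascPochhammer_one]

lemma Bc_pascal (x : ℝ) (n : ℕ) :
    Bc (x + 1) (n + 1) - Bc (x + 1) n = Bc x (n + 1) := by
  have h1 : Polynomial.eval x (ascPochhammer ℝ (n + 1))
      = x * Polynomial.eval (x + 1) (ascPochhammer ℝ n) := by
    rw [ascPochhammer_succ_left]; simp [Polynomial.eval_comp]
  have h2 : Polynomial.eval (x + 1) (ascPochhammer ℝ (n + 1))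
      = Polynomial.eval (x + 1) (ascPochhammer ℝ n) * (x + 1 + n) := by
    rw [ascPochhammer_succ_eval]
  have h : ((n + 1).factorial : ℝ) = ((n : ℝ) + 1) * n.factorial := by
    push_cast [Nat.factorial_succ]; ring
  have hn : (n.factorial : ℝ) ≠ 0 := by positivity
  have hn1 : ((n : ℝ) + 1) ≠ 0 := by positivity
  simp only [Bc]
  rw [h1, h2, h]
  field_simp [Bc, h1, h2, h]
  ring

lemma Bc_zero_arg (n : ℕ) : Bc 0 (n + 1) = 0 := by
  have : Polynomial.eval (0:ℝ) (ascPochhammer ℝ (n+1)) = 0 := by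
    rw [ascPochhammer_succ_left]; simp
  simp [Bc, this]

/-- Vandermonde convolution for `Bc`. -/
lemma Bc_vandermonde (x y : ℝ) (t : ℕ) :
    ∑ j ∈ Finset.range (t + 1), Bc x j * Bc y (t - j) = Bc (x + y) t := by
  induction t with
  | zero => simp [Bc_zero]
  | succ t ih =>
    have key : ((t : ℝ) + 1) * ∑ j ∈ Finset.range (t + 2), Bc x j * Bc y (t + 1 - j)
        = (x + y + t) * ∑ j ∈ Finset.range (t + 1), Bc x j * Bc y (t - j) := by
      rw [Finset.mul_sum]
      have hsplit : ∀ j ∈ Finset.range (t + 2),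
          ((t : ℝ) + 1) * (Bc x j * Bc y (t + 1 - j))
            = (j : ℝ) * Bc x j * Bc y (t + 1 - j)
              + Bc x j * (((t + 1 - j : ℕ) : ℝ) * Bc y (t + 1 - j)) := by
        intro j hj
        have hj' : j ≤ t + 1 := Nat.lt_succ_iff.mp (Finset.mem_range.mp hj)
        have : ((t + 1 - j : ℕ) : ℝ) = (t : ℝ) + 1 - j := by
          push_cast [Nat.cast_sub hj']; ring
        rw [this]; ring
      rw [Finset.sum_congr rfl hsplit, Finset.sum_add_distrib]
      have hA : ∑ j ∈ Finset.range (t + 2), (j : ℝ) * Bc x j * Bc y (t + 1 - j)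
          = ∑ i ∈ Finset.range (t + 1), (x + i) * Bc x i * Bc y (t - i) := by
        rw [Finset.sum_range_succ']
        simp only [Nat.cast_zero, zero_mul, zero_mul, add_zero]
        refine Finset.sum_congr rfl fun i _ => ?_
        have h1 : ((i : ℝ) + 1) * Bc x (i + 1) = (x + i) * Bc x i := Bc_succ x i
        have h2 : t + 1 - (i + 1) = t - i := by omega
        rw [h2]
        push_cast
        calc ((i : ℝ) + 1) * Bc x (i + 1) * Bc y (t - i)
            = (((i : ℝ) + 1) * Bc x (i + 1)) * Bc y (t - i) := by ring
          _ = (x + i) * Bc x i * Bc y (t - i) := by rw [h1]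
      have hC : ∑ j ∈ Finset.range (t + 2), Bc x j * (((t + 1 - j : ℕ) : ℝ) * Bc y (t + 1 - j))
          = ∑ j ∈ Finset.range (t + 1), Bc x j * ((y + (t - j : ℕ)) * Bc y (t - j)) := by
        rw [Finset.sum_range_succ]
        simp only [Nat.sub_self, Nat.cast_zero, zero_mul, mul_zero, add_zero]
        refine Finset.sum_congr rfl fun j hj => ?_
        have hj' : j ≤ t := Nat.lt_succ_iff.mp (Finset.mem_range.mp hj)
        have h2 : t + 1 - j = (t - j) + 1 := by omega
        rw [h2]
        have h1 : (((t - j : ℕ) : ℝ) + 1) * Bc y ((t - j) + 1) = (y + (t - j : ℕ)) * Bc y (t - j) :=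
          Bc_succ y (t - j)
        push_cast at h1 ⊢
        rw [h1]
      rw [hA, hC, ← Finset.sum_add_distrib, Finset.mul_sum]
      refine Finset.sum_congr rfl fun j hj => ?_
      have hj' : j ≤ t := Nat.lt_succ_iff.mp (Finset.mem_range.mp hj)
      have : ((t - j : ℕ) : ℝ) = (t : ℝ) - j := by push_cast [Nat.cast_sub hj']; ring
      rw [this]; ring
    have ht1 : ((t : ℝ) + 1) ≠ 0 := by positivity
    have h2 : ((t : ℝ) + 1) * Bc (x + y) (t + 1) = (x + y + t) * Bc (x + y) t := Bc_succ _ t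
    have h3 : ((t : ℝ) + 1) * ∑ j ∈ Finset.range (t + 2), Bc x j * Bc y (t + 1 - j)
        = ((t : ℝ) + 1) * Bc (x + y) (t + 1) := by rw [key, ih, h2]
    exact mul_left_cancel₀ ht1 h3

lemma Bc_second_diff (z : ℝ) (m : ℕ) :
    Bc (z + 2) (m + 2) - 2 * Bc (z + 2) (m + 1) + Bc (z + 2) m = Bc z (m + 2) := by
  have p1 := Bc_pascal (z + 1) (m + 1)
  have p2 := Bc_pascal (z + 1) m
  have p3 := Bc_pascal z (m + 1)
  have e : z + 1 + 1 = z + 2 := by ring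
  rw [e] at p1 p2
  linarith

lemma Gamma_add_nat {x : ℝ} (hx : 0 < x) (n : ℕ) :
    Real.Gamma (x + n) = Polynomial.eval x (ascPochhammer ℝ n) * Real.Gamma x := by
  induction n with
  | zero => simp
  | succ n ih =>
    have hxn : x + n ≠ 0 := by positivity
    have : x + ((n : ℝ) + 1) = (x + n) + 1 := by ring
    push_cast [this, Real.Gamma_add_one hxn, ih, ascPochhammer_succ_eval]
    ring

lemma ffact_nat_add {x : ℝ} (hx : 0 < x) (n : ℕ) :
    ffact ((n : ℝ) + x - 1) (x - 1) = Bc x n * Real.Gamma x := by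
  have h1 : (n : ℝ) + x - 1 + 1 = x + n := by ring
  have h2 : x + (n : ℝ) - (x - 1) = (n : ℝ) + 1 := by ring
  rw [ffact, h1, h2, Gamma_add_nat hx n, Real.Gamma_nat_eq_factorial, Bc]
  have : (n.factorial : ℝ) ≠ 0 := by positivity
  field_simp

lemma ascPochhammer_eval_prod (x : ℝ) (n : ℕ) :
    Polynomial.eval x (ascPochhammer ℝ n) = ∏ i ∈ Finset.range n, (x + i) := by
  induction n with
  | zero => simp
  | succ n ih => rw [ascPochhammer_succ_eval, ih, Finset.prod_range_succ]

lemma Bc_le {x : ℝ} (hx : 0 ≤ x) (n : ℕ) :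
    Bc x n ≤ (x + n) ^ n / n.factorial := by
  have h : Polynomial.eval x (ascPochhammer ℝ n) ≤ (x + n) ^ n := by
    rw [ascPochhammer_eval_prod]
    calc ∏ i ∈ Finset.range n, (x + i) ≤ ∏ _i ∈ Finset.range n, (x + n) := by
          refine Finset.prod_le_prod (fun i _ => by positivity) (fun i hi => ?_)
          have := Finset.mem_range.mp hi
          have : (i : ℝ) ≤ n := by exact_mod_cast this.le
          linarith
      _ = (x + n) ^ n := by rw [Finset.prod_const, Finset.card_range]
  exact div_le_div_of_nonneg_right h (by positivity) |>.trans_eq rfl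

lemma Bc_nonneg' {x : ℝ} (hx : 0 ≤ x) (n : ℕ) : 0 ≤ Bc x n := by
  have : (0:ℝ) ≤ Polynomial.eval x (ascPochhammer ℝ n) := by
    rw [ascPochhammer_eval_prod]
    exact Finset.prod_nonneg fun i _ => by positivity
  exact div_nonneg this (by positivity)

lemma summable_one_add_pow_mul {α : ℝ} (hα : |α| < 1) (n : ℕ) :
    Summable fun k : ℕ => ((k : ℝ) + 1) ^ n * |α| ^ k := by
  have habs : ‖|α|‖ < 1 := by rwa [Real.norm_eq_abs, abs_abs]
  have hgeom : ∀ i : ℕ, Summable fun k : ℕ => (n.choose i : ℝ) * ((k : ℝ) ^ i * |α| ^ k) :=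
    fun i => (summable_pow_mul_geometric_of_norm_lt_one i habs).mul_left _
  have hfun : ∀ k : ℕ, ((k : ℝ) + 1) ^ n * |α| ^ k
      = ∑ i ∈ Finset.range (n + 1), (n.choose i : ℝ) * ((k : ℝ) ^ i * |α| ^ k) := by
    intro k
    rw [add_pow, Finset.sum_mul]
    refine Finset.sum_congr rfl fun i _ => by ring
  have hsum := summable_sum (s := Finset.range (n + 1)) (fun i _ => hgeom i)
  exact hsum.congr fun k => (hfun k).symm

lemma summable_Bc {α : ℝ} (hα : |α| < 1) {δ0 c : ℝ} (hδ : 0 ≤ δ0) (hc : 0 ≤ c) (n : ℕ) :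
    Summable fun k : ℕ => α ^ k * Bc ((k : ℝ) * δ0 + c) n := by
  set M : ℝ := (δ0 + c + n) ^ n / n.factorial with hM
  have hMnn : 0 ≤ M := by positivity
  refine Summable.of_norm ?_
  refine Summable.of_nonneg_of_le (fun k => norm_nonneg _) (fun k => ?_)
    (((summable_one_add_pow_mul hα n).mul_left M))
  have hxnn : (0:ℝ) ≤ (k : ℝ) * δ0 + c := by positivity
  have h1 : ‖α ^ k * Bc ((k : ℝ) * δ0 + c) n‖ = |α| ^ k * Bc ((k : ℝ) * δ0 + c) n := by
    rw [Real.norm_eq_abs, abs_mul, abs_pow, abs_of_nonneg (Bc_nonneg' hxnn n)]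
  rw [h1]
  have hb : Bc ((k : ℝ) * δ0 + c) n ≤ (((k : ℝ) + 1) * (δ0 + c + n)) ^ n / n.factorial := by
    refine (Bc_le hxnn n).trans ?_
    have harg : (k : ℝ) * δ0 + c + n ≤ ((k : ℝ) + 1) * (δ0 + c + n) := by
      have hk : (0:ℝ) ≤ k := Nat.cast_nonneg k
      nlinarith [Nat.cast_nonneg (α := ℝ) n]
    exact div_le_div_of_nonneg_right (pow_le_pow_left₀ (by positivity) harg n) (by positivity)
      |>.trans_eq rfl
  calc |α| ^ k * Bc ((k : ℝ) * δ0 + c) n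
      ≤ |α| ^ k * ((((k : ℝ) + 1) * (δ0 + c + n)) ^ n / n.factorial) := by
        exact mul_le_mul_of_nonneg_left hb (by positivity)
    _ = M * (((k : ℝ) + 1) ^ n * |α| ^ k) := by rw [hM, mul_pow]; ring

noncomputable def EML (μ ν α : ℝ) : ℕ → ℝ
  | 0 => 0
  | n + 1 => ∑' k : ℕ, α ^ k * Bc ((k : ℝ) * (ν - μ) + ν) n

lemma EML_closed_g {μ ν α : ℝ} (hμ0 : 0 < μ) (hμ1 : μ < 1) (hν1 : 1 < ν) (hν2 : ν < 2) (hα : |α| < 1) (m : ℕ) :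
    gY ν (EML μ ν α) (m + 1) = ∑' k : ℕ, α ^ k * Bc ((k : ℝ) * (ν - μ) + 2) m := by
  have hδ : (0:ℝ) ≤ ν - μ := by linarith
  have hν0 : (0:ℝ) ≤ ν := by linarith
  have hΓ : Real.Gamma (2 - ν) ≠ 0 := (Real.Gamma_pos_of_pos (by linarith)).ne'
  rw [gY, Finset.sum_range_succ']
  have hE0 : EML μ ν α 0 = 0 := rfl
  rw [hE0, mul_zero, add_zero]
  have hterm : ∀ i ∈ Finset.range (m + 1),
      ffact (((m + 1 : ℕ) : ℝ) + 1 - ν - ((i + 1 : ℕ) : ℝ)) (1 - ν) * EML μ ν α (i + 1)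
        = ∑' k : ℕ, (Bc (2 - ν) (m - i) * Real.Gamma (2 - ν))
            * (α ^ k * Bc ((k : ℝ) * (ν - μ) + ν) i) := by
    intro i hi
    have hi' : i ≤ m := Nat.lt_succ_iff.mp (Finset.mem_range.mp hi)
    have h1 : ((m + 1 : ℕ) : ℝ) + 1 - ν - ((i + 1 : ℕ) : ℝ)
        = ((m - i : ℕ) : ℝ) + (2 - ν) - 1 := by
      push_cast [Nat.cast_sub hi']; ring
    have h2 : (1 - ν) = (2 - ν) - 1 := by ring
    rw [h1, h2, ffact_nat_add (by linarith) (m - i)]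
    have hEsucc : EML μ ν α (i + 1) = ∑' k : ℕ, α ^ k * Bc ((k : ℝ) * (ν - μ) + ν) i := rfl
    rw [hEsucc, ← tsum_mul_left]
  rw [Finset.sum_congr rfl hterm]
  rw [← Summable.tsum_finsetSum (fun i _ => (summable_Bc hα hδ hν0 i).mul_left _)]
  have hswap : ∀ k : ℕ,
      ∑ i ∈ Finset.range (m + 1), (Bc (2 - ν) (m - i) * Real.Gamma (2 - ν))
          * (α ^ k * Bc ((k : ℝ) * (ν - μ) + ν) i)
        = Real.Gamma (2 - ν) * (α ^ k * Bc ((k : ℝ) * (ν - μ) + 2) m) := by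
    intro k
    have hv := Bc_vandermonde ((k : ℝ) * (ν - μ) + ν) (2 - ν) m
    have h3 : (k : ℝ) * (ν - μ) + ν + (2 - ν) = (k : ℝ) * (ν - μ) + 2 := by ring
    rw [h3] at hv
    calc ∑ i ∈ Finset.range (m + 1), (Bc (2 - ν) (m - i) * Real.Gamma (2 - ν))
            * (α ^ k * Bc ((k : ℝ) * (ν - μ) + ν) i)
        = (Real.Gamma (2 - ν) * α ^ k) *
            ∑ i ∈ Finset.range (m + 1), Bc ((k : ℝ) * (ν - μ) + ν) i * Bc (2 - ν) (m - i) := by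
          rw [Finset.mul_sum]; exact Finset.sum_congr rfl fun i _ => by ring
      _ = Real.Gamma (2 - ν) * (α ^ k * Bc ((k : ℝ) * (ν - μ) + 2) m) := by rw [hv]; ring
  rw [tsum_congr hswap, tsum_mul_left, ← mul_assoc]
  field_simp
  refine tsum_congr fun k => ?_
  ring_nf

lemma EML_g_zero {μ ν α : ℝ} (hμ0 : 0 < μ) (hμ1 : μ < 1) (hν1 : 1 < ν) (hν2 : ν < 2) (hα : |α| < 1) : gY ν (EML μ ν α) 0 = 0 := by
  rw [gY]
  simp [EML]

lemma EML_closed_W {μ ν α : ℝ} (hμ0 : 0 < μ) (hμ1 : μ < 1) (hν1 : 1 < ν) (hν2 : ν < 2) (hα : |α| < 1) (t : ℕ) :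
    WY μ (EML μ ν α) t = ∑' k : ℕ, α ^ k * Bc ((k : ℝ) * (ν - μ) + (ν - μ + 1)) t := by
  have hδ : (0:ℝ) ≤ ν - μ := by linarith
  have hν0 : (0:ℝ) ≤ ν := by linarith
  have hΓ : Real.Gamma (1 - μ) ≠ 0 := (Real.Gamma_pos_of_pos (by linarith)).ne'
  rw [WY]
  have hterm : ∀ j ∈ Finset.range (t + 1),
      ffact ((t : ℝ) - μ - (j : ℝ)) (-μ) * EML μ ν α (j + 1)
        = ∑' k : ℕ, (Bc (1 - μ) (t - j) * Real.Gamma (1 - μ))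
            * (α ^ k * Bc ((k : ℝ) * (ν - μ) + ν) j) := by
    intro j hj
    have hj' : j ≤ t := Nat.lt_succ_iff.mp (Finset.mem_range.mp hj)
    have h1 : (t : ℝ) - μ - (j : ℝ) = ((t - j : ℕ) : ℝ) + (1 - μ) - 1 := by
      push_cast [Nat.cast_sub hj']; ring
    have h2 : (-μ) = (1 - μ) - 1 := by ring
    rw [h1, h2, ffact_nat_add (by linarith) (t - j)]
    have hEsucc : EML μ ν α (j + 1) = ∑' k : ℕ, α ^ k * Bc ((k : ℝ) * (ν - μ) + ν) j := rfl
    rw [hEsucc, ← tsum_mul_left]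
  rw [Finset.sum_congr rfl hterm]
  rw [← Summable.tsum_finsetSum (fun j _ => (summable_Bc hα hδ hν0 j).mul_left _)]
  have hswap : ∀ k : ℕ,
      ∑ j ∈ Finset.range (t + 1), (Bc (1 - μ) (t - j) * Real.Gamma (1 - μ))
          * (α ^ k * Bc ((k : ℝ) * (ν - μ) + ν) j)
        = Real.Gamma (1 - μ) * (α ^ k * Bc ((k : ℝ) * (ν - μ) + (ν - μ + 1)) t) := by
    intro k
    have hv := Bc_vandermonde ((k : ℝ) * (ν - μ) + ν) (1 - μ) t
    have h3 : (k : ℝ) * (ν - μ) + ν + (1 - μ) = (k : ℝ) * (ν - μ) + (ν - μ + 1) := by ring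
    rw [h3] at hv
    calc ∑ j ∈ Finset.range (t + 1), (Bc (1 - μ) (t - j) * Real.Gamma (1 - μ))
            * (α ^ k * Bc ((k : ℝ) * (ν - μ) + ν) j)
        = (Real.Gamma (1 - μ) * α ^ k) *
            ∑ j ∈ Finset.range (t + 1), Bc ((k : ℝ) * (ν - μ) + ν) j * Bc (1 - μ) (t - j) := by
          rw [Finset.mul_sum]; exact Finset.sum_congr rfl fun j _ => by ring
      _ = Real.Gamma (1 - μ) * (α ^ k * Bc ((k : ℝ) * (ν - μ) + (ν - μ + 1)) t) := by
          rw [hv]; ring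
  rw [tsum_congr hswap, tsum_mul_left, ← mul_assoc]
  field_simp
  refine tsum_congr fun k => ?_
  ring_nf


noncomputable def EqT (μ ν α : ℝ) (Y : ℕ → ℝ) (t : ℕ) : ℝ :=
  -(gY ν Y (t + 2) - 2 * gY ν Y (t + 1) + gY ν Y t) + α * (WY μ Y (t + 1) - WY μ Y t)


lemma gY_congr {ν : ℝ} {Y Z : ℕ → ℝ} {t : ℕ} (h : ∀ j ≤ t, Y j = Z j) :
    gY ν Y t = gY ν Z t := by
  unfold gY
  congr 1
  refine Finset.sum_congr rfl fun j hj => ?_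
  rw [h j (Nat.lt_succ_iff.mp (Finset.mem_range.mp hj))]

lemma WY_congr {μ : ℝ} {Y Z : ℕ → ℝ} {t : ℕ} (h : ∀ j ≤ t + 1, Y j = Z j) :
    WY μ Y t = WY μ Z t := by
  unfold WY
  congr 1
  refine Finset.sum_congr rfl fun j hj => ?_
  rw [h (j + 1) (by have := Nat.lt_succ_iff.mp (Finset.mem_range.mp hj); omega)]

lemma EqT_congr {μ ν α : ℝ} {Y Z : ℕ → ℝ} {t : ℕ} (h : ∀ j ≤ t + 2, Y j = Z j) :
    EqT μ ν α Y t = EqT μ ν α Z t := by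
  unfold EqT
  rw [gY_congr (fun j hj => h j hj), gY_congr (fun j hj => h j (by omega)),
    gY_congr (fun j hj => h j (by omega)), WY_congr (fun j hj => h j (by omega)),
    WY_congr (fun j hj => h j (by omega))]

lemma gY_lin {ν r : ℝ} {X Z : ℕ → ℝ} (t : ℕ) :
    gY ν (fun n => X n + r * Z n) t = gY ν X t + r * gY ν Z t := by
  unfold gY
  simp only [mul_add, Finset.sum_add_distrib]
  have h2 : ∑ j ∈ Finset.range (t + 1), ffact ((t : ℝ) + 1 - ν - (j : ℝ)) (1 - ν) * (r * Z j)
      = r * ∑ j ∈ Finset.range (t + 1), ffact ((t : ℝ) + 1 - ν - (j : ℝ)) (1 - ν) * Z j := by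
    rw [Finset.mul_sum]; exact Finset.sum_congr rfl fun j _ => by ring
  rw [h2]; ring

lemma WY_lin {μ r : ℝ} {X Z : ℕ → ℝ} (t : ℕ) :
    WY μ (fun n => X n + r * Z n) t = WY μ X t + r * WY μ Z t := by
  unfold WY
  simp only [mul_add, Finset.sum_add_distrib]
  have h2 : ∑ j ∈ Finset.range (t + 1), ffact ((t : ℝ) - μ - (j : ℝ)) (-μ) * (r * Z (j + 1))
      = r * ∑ j ∈ Finset.range (t + 1), ffact ((t : ℝ) - μ - (j : ℝ)) (-μ) * Z (j + 1) := by
    rw [Finset.mul_sum]; exact Finset.sum_congr rfl fun j _ => by ring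
  rw [h2]; ring

lemma EqT_lin {μ ν α r : ℝ} {X Z : ℕ → ℝ} (t : ℕ) :
    EqT μ ν α (fun n => X n + r * Z n) t = EqT μ ν α X t + r * EqT μ ν α Z t := by
  unfold EqT
  rw [gY_lin, gY_lin, gY_lin, WY_lin, WY_lin]
  ring

lemma EqT_zero_fun {μ ν α : ℝ} (t : ℕ) : EqT μ ν α (fun _ => 0) t = 0 := by
  simp [EqT, gY, WY]

lemma ffact_self (x : ℝ) : ffact x x = Real.Gamma (x + 1) := by
  simp [ffact, Real.Gamma_one]

lemma EqT_support {μ ν α : ℝ} (hμ0 : 0 < μ) (hμ1 : μ < 1) (hν1 : 1 < ν) (hν2 : ν < 2)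
    {Y : ℕ → ℝ} {t : ℕ} (h : ∀ j ≤ t + 1, Y j = 0) :
    EqT μ ν α Y t = (α - 1) * Y (t + 2) := by
  have hΓν : Real.Gamma (2 - ν) ≠ 0 := (Real.Gamma_pos_of_pos (by linarith)).ne'
  have hΓμ : Real.Gamma (1 - μ) ≠ 0 := (Real.Gamma_pos_of_pos (by linarith)).ne'
  have hg2 : gY ν Y (t + 2) = Y (t + 2) := by
    unfold gY
    rw [Finset.sum_range_succ]
    have hz : ∀ j ∈ Finset.range (t + 2),
        ffact (((t + 2 : ℕ) : ℝ) + 1 - ν - (j : ℝ)) (1 - ν) * Y j = 0 := by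
      intro j hj
      rw [h j (by have := Finset.mem_range.mp hj; omega), mul_zero]
    rw [Finset.sum_congr rfl hz, Finset.sum_const, smul_zero, zero_add]
    have e : ((t + 2 : ℕ) : ℝ) + 1 - ν - ((t + 2 : ℕ) : ℝ) = 1 - ν := by push_cast; ring
    rw [e]
    have e2 : ffact (1 - ν) (1 - ν) = Real.Gamma (2 - ν) := by
      rw [ffact_self, show (1:ℝ) - ν + 1 = 2 - ν from by ring]
    rw [e2]
    field_simp
  have hg1 : gY ν Y (t + 1) = 0 := by
    unfold gY
    have hz : ∀ j ∈ Finset.range (t + 2),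
        ffact (((t + 1 : ℕ) : ℝ) + 1 - ν - (j : ℝ)) (1 - ν) * Y j = 0 := by
      intro j hj
      rw [h j (by have := Finset.mem_range.mp hj; omega), mul_zero]
    rw [Finset.sum_congr rfl hz, Finset.sum_const, smul_zero, mul_zero]
  have hg0 : gY ν Y t = 0 := by
    unfold gY
    have hz : ∀ j ∈ Finset.range (t + 1),
        ffact ((t : ℕ) + 1 - ν - (j : ℝ)) (1 - ν) * Y j = 0 := by
      intro j hj
      rw [h j (by have := Finset.mem_range.mp hj; omega), mul_zero]
    rw [Finset.sum_congr rfl hz, Finset.sum_const, smul_zero, mul_zero]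
  have hW1 : WY μ Y (t + 1) = Y (t + 2) := by
    unfold WY
    rw [Finset.sum_range_succ]
    have hz : ∀ j ∈ Finset.range (t + 1),
        ffact (((t + 1 : ℕ) : ℝ) - μ - (j : ℝ)) (-μ) * Y (j + 1) = 0 := by
      intro j hj
      rw [h (j + 1) (by have := Finset.mem_range.mp hj; omega), mul_zero]
    rw [Finset.sum_congr rfl hz, Finset.sum_const, smul_zero, zero_add]
    have e : ((t + 1 : ℕ) : ℝ) - μ - ((t + 1 : ℕ) : ℝ) = -μ := by push_cast; ring
    rw [e]
    have e2 : ffact (-μ) (-μ) = Real.Gamma (1 - μ) := by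
      rw [ffact_self, show -μ + 1 = 1 - μ from by ring]
    rw [e2]
    field_simp
  have hW0 : WY μ Y t = 0 := by
    unfold WY
    have hz : ∀ j ∈ Finset.range (t + 1),
        ffact ((t : ℕ) - μ - (j : ℝ)) (-μ) * Y (j + 1) = 0 := by
      intro j hj
      rw [h (j + 1) (by have := Finset.mem_range.mp hj; omega), mul_zero]
    rw [Finset.sum_congr rfl hz, Finset.sum_const, smul_zero, mul_zero]
  rw [EqT, hg2, hg1, hg0, hW1, hW0]
  ring

lemma EqT_step {μ ν α : ℝ} (hμ0 : 0 < μ) (hμ1 : μ < 1) (hν1 : 1 < ν) (hν2 : ν < 2)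
    (Y : ℕ → ℝ) (t : ℕ) :
    EqT μ ν α Y t
      = EqT μ ν α (fun j => if j < t + 2 then Y j else 0) t + (α - 1) * Y (t + 2) := by
  set Z : ℕ → ℝ := fun j => if j < t + 2 then Y j else 0 with hZ
  set D : ℕ → ℝ := fun j => Y j - Z j with hD
  have hYD : ∀ n, Y n = Z n + 1 * D n := fun n => by simp [hD]
  have h1 : EqT μ ν α Y t = EqT μ ν α (fun n => Z n + 1 * D n) t :=
    EqT_congr fun j _ => hYD j
  rw [h1, EqT_lin, one_mul]
  congr 1
  have hsup : ∀ j ≤ t + 1, D j = 0 := by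
    intro j hj
    simp [hD, hZ, Nat.lt_succ_of_le hj, if_pos (by omega : j < t + 2)]
  rw [EqT_support hμ0 hμ1 hν1 hν2 hsup]
  have : D (t + 2) = Y (t + 2) := by simp [hD, hZ]
  rw [this]

noncomputable def sol (μ ν α : ℝ) (H : ℕ → ℝ) (s : ℝ) : ℕ → ℝ
  | 0 => 0
  | 1 => s
  | n + 2 =>
    (H (n + 1) - EqT μ ν α (fun j => if _h : j < n + 2 then sol μ ν α H s j else 0) n) / (α - 1)
termination_by n => n
decreasing_by exact _h

lemma sol_eq (μ ν α : ℝ) (H : ℕ → ℝ) (s : ℝ) (n : ℕ) :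
    sol μ ν α H s (n + 2)
      = (H (n + 1) - EqT μ ν α (fun j => if j < n + 2 then sol μ ν α H s j else 0) n)
          / (α - 1) := by
  rw [sol]
  simp only [dite_eq_ite]

lemma sol_zero (μ ν α : ℝ) (H : ℕ → ℝ) (s : ℝ) : sol μ ν α H s 0 = 0 := by rw [sol]

lemma sol_one (μ ν α : ℝ) (H : ℕ → ℝ) (s : ℝ) : sol μ ν α H s 1 = s := by rw [sol]

lemma sol_spec {μ ν α : ℝ} (hμ0 : 0 < μ) (hμ1 : μ < 1) (hν1 : 1 < ν) (hν2 : ν < 2)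
    (hα : |α| < 1) (H : ℕ → ℝ) (s : ℝ) (t : ℕ) :
    EqT μ ν α (sol μ ν α H s) t = H (t + 1) := by
  have hα1 : α - 1 ≠ 0 := by
    have := abs_lt.mp hα; intro h; linarith [this.2]
  rw [EqT_step hμ0 hμ1 hν1 hν2 (sol μ ν α H s) t, sol_eq μ ν α H s t]
  field_simp
  ring

lemma sol_unique {μ ν α : ℝ} (hμ0 : 0 < μ) (hμ1 : μ < 1) (hν1 : 1 < ν) (hν2 : ν < 2)
    (hα : |α| < 1) (H : ℕ → ℝ) (s : ℝ) (b : ℕ) (Y : ℕ → ℝ)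
    (hY0 : Y 0 = 0) (hY1 : Y 1 = s)
    (hEq : ∀ t ≤ b + 1, EqT μ ν α Y t = H (t + 1)) :
    ∀ n ≤ b + 3, Y n = sol μ ν α H s n := by
  have hα1 : α - 1 ≠ 0 := by
    have := abs_lt.mp hα; intro h; linarith [this.2]
  intro n
  induction n using Nat.strong_induction_on with
  | _ n ih =>
    intro hn
    match n with
    | 0 => simpa [sol] using hY0
    | 1 => simpa [sol] using hY1
    | (m + 2) =>
      have hm : m ≤ b + 1 := by omega
      have h1 : EqT μ ν α Y m
          = EqT μ ν α (fun j => if j < m + 2 then Y j else 0) m + (α - 1) * Y (m + 2) :=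
        EqT_step hμ0 hμ1 hν1 hν2 Y m
      have h2 : (fun j => if j < m + 2 then Y j else 0)
          = (fun j => if j < m + 2 then sol μ ν α H s j else 0) := by
        funext j
        by_cases hj : j < m + 2
        · simp only [if_pos hj]
          exact ih j (by omega) (by omega)
        · simp only [if_neg hj]
      rw [hEq m hm, h2] at h1
      have h3 : Y (m + 2)
          = (H (m + 1) - EqT μ ν α (fun j => if j < m + 2 then sol μ ν α H s j else 0) m)
              / (α - 1) := by
        field_simp
        linarith [h1]
      rw [h3, sol_eq]

lemma EML_ddg {μ ν α : ℝ} (hμ0 : 0 < μ) (hμ1 : μ < 1) (hν1 : 1 < ν) (hν2 : ν < 2) (hα : |α| < 1) (t : ℕ) :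
    gY ν (EML μ ν α) (t + 2) - 2 * gY ν (EML μ ν α) (t + 1) + gY ν (EML μ ν α) t
      = ∑' k : ℕ, α ^ k * Bc ((k : ℝ) * (ν - μ) + 0) (t + 1) := by
  have hδ : (0:ℝ) ≤ ν - μ := by linarith
  have h2 : (0:ℝ) ≤ 2 := by norm_num
  have hS : ∀ m : ℕ, Summable fun k : ℕ => α ^ k * Bc ((k : ℝ) * (ν - μ) + 2) m :=
    fun m => summable_Bc hα hδ h2 m
  cases t with
  | zero =>
    rw [EML_closed_g hμ0 hμ1 hν1 hν2 hα 1, EML_closed_g hμ0 hμ1 hν1 hν2 hα 0,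
      EML_g_zero hμ0 hμ1 hν1 hν2 hα, add_zero]
    rw [show (2 : ℝ) * ∑' k : ℕ, α ^ k * Bc ((k : ℝ) * (ν - μ) + 2) 0
        = ∑' k : ℕ, 2 * (α ^ k * Bc ((k : ℝ) * (ν - μ) + 2) 0) from (tsum_mul_left).symm]
    rw [← Summable.tsum_sub (hS 1) ((hS 0).mul_left 2)]
    refine tsum_congr fun k => ?_
    rw [Bc_one_arg, Bc_zero, Bc_one_arg]
    ring
  | succ s =>
    rw [EML_closed_g hμ0 hμ1 hν1 hν2 hα (s + 2), EML_closed_g hμ0 hμ1 hν1 hν2 hα (s + 1),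
      EML_closed_g hμ0 hμ1 hν1 hν2 hα s]
    rw [show (2 : ℝ) * ∑' k : ℕ, α ^ k * Bc ((k : ℝ) * (ν - μ) + 2) (s + 1)
        = ∑' k : ℕ, 2 * (α ^ k * Bc ((k : ℝ) * (ν - μ) + 2) (s + 1)) from (tsum_mul_left).symm]
    rw [← Summable.tsum_sub (hS (s + 2)) ((hS (s + 1)).mul_left 2),
      ← Summable.tsum_add (Summable.sub (hS (s + 2)) ((hS (s + 1)).mul_left 2)) (hS s)]
    refine tsum_congr fun k => ?_
    have := Bc_second_diff ((k : ℝ) * (ν - μ)) s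
    have e0 : (k : ℝ) * (ν - μ) + 0 = (k : ℝ) * (ν - μ) := by ring
    rw [e0]
    linear_combination α ^ k * this

lemma EML_dW {μ ν α : ℝ} (hμ0 : 0 < μ) (hμ1 : μ < 1) (hν1 : 1 < ν) (hν2 : ν < 2) (hα : |α| < 1) (t : ℕ) :
    WY μ (EML μ ν α) (t + 1) - WY μ (EML μ ν α) t
      = ∑' k : ℕ, α ^ k * Bc ((k : ℝ) * (ν - μ) + (ν - μ)) (t + 1) := by
  have hδ : (0:ℝ) ≤ ν - μ := by linarith
  have hδ1 : (0:ℝ) ≤ ν - μ + 1 := by linarith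
  have hS : ∀ m : ℕ, Summable fun k : ℕ => α ^ k * Bc ((k : ℝ) * (ν - μ) + (ν - μ + 1)) m :=
    fun m => summable_Bc hα hδ hδ1 m
  rw [EML_closed_W hμ0 hμ1 hν1 hν2 hα (t + 1), EML_closed_W hμ0 hμ1 hν1 hν2 hα t,
    ← Summable.tsum_sub (hS (t + 1)) (hS t)]
  refine tsum_congr fun k => ?_
  have hp := Bc_pascal ((k : ℝ) * (ν - μ) + (ν - μ)) t
  have e : (k : ℝ) * (ν - μ) + (ν - μ) + 1 = (k : ℝ) * (ν - μ) + (ν - μ + 1) := by ring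
  rw [e] at hp
  linear_combination α ^ k * hp

lemma EML_hom {μ ν α : ℝ} (hμ0 : 0 < μ) (hμ1 : μ < 1) (hν1 : 1 < ν) (hν2 : ν < 2) (hα : |α| < 1) (t : ℕ) : EqT μ ν α (EML μ ν α) t = 0 := by
  have hδ : (0:ℝ) ≤ ν - μ := by linarith
  have h0 : (0:ℝ) ≤ 0 := le_refl 0
  rw [EqT, EML_ddg hμ0 hμ1 hν1 hν2 hα t, EML_dW hμ0 hμ1 hν1 hν2 hα t]
  set F : ℕ → ℝ := fun k => α ^ k * Bc ((k : ℝ) * (ν - μ) + 0) (t + 1) with hF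
  have hSF : Summable F := summable_Bc hα hδ h0 (t + 1)
  have hshift : α * (∑' k : ℕ, α ^ k * Bc ((k : ℝ) * (ν - μ) + (ν - μ)) (t + 1))
      = ∑' k : ℕ, F (k + 1) := by
    rw [← tsum_mul_left]
    refine tsum_congr fun k => ?_
    have e : ((k : ℕ) + 1 : ℕ) = k + 1 := rfl
    have e2 : (((k + 1 : ℕ)) : ℝ) * (ν - μ) + 0 = (k : ℝ) * (ν - μ) + (ν - μ) := by
      push_cast; ring
    rw [hF]
    simp only []
    rw [e2, pow_succ]
    ring
  rw [hshift]
  have hzero : ∑' k : ℕ, F k = F 0 + ∑' k : ℕ, F (k + 1) := Summable.tsum_eq_zero_add hSF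
  have hF0 : F 0 = 0 := by
    rw [hF]
    simp only [Nat.cast_zero, zero_mul, zero_add, pow_zero, one_mul]
    exact Bc_zero_arg t
  have : ∑' k : ℕ, F (k + 1) = ∑' k : ℕ, F k := by rw [hzero, hF0, zero_add]
  rw [this]
  ring


lemma EML_one {μ ν α : ℝ} (hα : |α| < 1) : EML μ ν α 1 = (1 - α)⁻¹ := by
  have h : EML μ ν α 1 = ∑' k : ℕ, α ^ k * Bc ((k : ℝ) * (ν - μ) + ν) 0 := rfl
  rw [h]
  have h2 : ∀ k : ℕ, α ^ k * Bc ((k : ℝ) * (ν - μ) + ν) 0 = α ^ k := fun k => by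
    rw [Bc_zero, mul_one]
  rw [tsum_congr h2]
  exact tsum_geometric_of_norm_lt_one (by rwa [Real.norm_eq_abs])

lemma EML_eq_ML {μ ν α : ℝ} (hμ0 : 0 < μ) (hμ1 : μ < 1) (hν1 : 1 < ν) (hν2 : ν < 2) (hα : |α| < 1) (n : ℕ) : mittagLeffler (ν - μ) ν α (n : ℤ) = EML μ ν α (n + 1) := by
  have hE : EML μ ν α (n + 1) = ∑' k : ℕ, α ^ k * Bc ((k : ℝ) * (ν - μ) + ν) n := rfl
  rw [mittagLeffler, hE]
  refine tsum_congr fun k => ?_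
  have hx : (0:ℝ) < (k : ℝ) * (ν - μ) + ν := by
    have : (0:ℝ) ≤ (k : ℝ) := Nat.cast_nonneg k
    nlinarith
  have hΓ : Real.Gamma ((k : ℝ) * (ν - μ) + ν) ≠ 0 := (Real.Gamma_pos_of_pos hx).ne'
  have e1 : (((n : ℤ) : ℝ)) + (k : ℝ) * (ν - μ) + ν - 1
      = (n : ℝ) + ((k : ℝ) * (ν - μ) + ν) - 1 := by push_cast; ring
  have e2 : (k : ℝ) * (ν - μ) + ν - 1 = ((k : ℝ) * (ν - μ) + ν) - 1 := by ring
  rw [e1, e2, ffact_nat_add hx n]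
  field_simp


/-- The Dirichlet boundary value problem `-Δ^ν y(t) + α Δ^μ y(t+ν-μ) = h(t+ν-1)` for
`t ∈ {0,…,b+1}`, `y(ν-2) = y(ν+b+1) = 0` (modelled by `Y : ℕ → ℝ` supported on
`{0,…,b+3}`, with `Y(0) = Y(b+3) = 0`) has a unique solution for every right-hand side
`H` if and only if `e_{ν-μ,ν}(α, b+2) ≠ 0`. -/
theorem dirichlet_unique_solvability_iff (μ ν α : ℝ) (b : ℕ)
    (hμ0 : 0 < μ) (hμ1 : μ < 1) (hν1 : 1 < ν) (hν2 : ν < 2) (hα : |α| < 1) :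
    (∀ H : ℕ → ℝ, ∃! Y : ℕ → ℝ,
      (∀ n : ℕ, b + 4 ≤ n → Y n = 0) ∧ Y 0 = 0 ∧ Y (b + 3) = 0 ∧
      ∀ t ≤ b + 1,
        -(gY ν Y (t + 2) - 2 * gY ν Y (t + 1) + gY ν Y t)
          + α * (WY μ Y (t + 1) - WY μ Y t) = H (t + 1))
    ↔ mittagLeffler (ν - μ) ν α ((b : ℤ) + 2) ≠ 0 := by
  have habs := abs_lt.mp hα
  have h1α : (1 : ℝ) - α ≠ 0 := by intro h; linarith [habs.2]
  set E : ℕ → ℝ := EML μ ν α with hE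
  have hE0 : E 0 = 0 := rfl
  have hE1ne : E 1 ≠ 0 := by
    rw [hE, EML_one hα]; exact inv_ne_zero h1α
  have hMLE : mittagLeffler (ν - μ) ν α ((b : ℤ) + 2) = E (b + 3) := by
    have h := EML_eq_ML hμ0 hμ1 hν1 hν2 hα (b + 2)
    have e : ((b + 2 : ℕ) : ℤ) = (b : ℤ) + 2 := by push_cast; ring
    rw [e] at h
    rw [h]
  have hEqdef : ∀ (Y : ℕ → ℝ) (t : ℕ),
      -(gY ν Y (t + 2) - 2 * gY ν Y (t + 1) + gY ν Y t)
        + α * (WY μ Y (t + 1) - WY μ Y t) = EqT μ ν α Y t := fun _ _ => rfl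
  rw [hMLE]
  constructor
  · -- unique solvability → E (b+3) ≠ 0
    intro hall hzero
    obtain ⟨Y0, _, huniq⟩ := hall (fun _ => 0)
    set φ : ℕ → ℝ := fun n => if n ≤ b + 3 then E n else 0 with hφ
    have hφprop : (∀ n : ℕ, b + 4 ≤ n → φ n = 0) ∧ φ 0 = 0 ∧ φ (b + 3) = 0 ∧
        ∀ t ≤ b + 1,
          -(gY ν φ (t + 2) - 2 * gY ν φ (t + 1) + gY ν φ t)
            + α * (WY μ φ (t + 1) - WY μ φ t) = (fun _ : ℕ => (0:ℝ)) (t + 1) := by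
      refine ⟨fun n hn => by simp [hφ, if_neg (by omega : ¬ n ≤ b + 3)], ?_, ?_, ?_⟩
      · simp [hφ, hE0]
      · simp only [hφ, if_pos (le_refl (b + 3))]
        exact hzero
      · intro t ht
        rw [hEqdef]
        have hcong : EqT μ ν α φ t = EqT μ ν α E t :=
          EqT_congr fun j hj => by simp [hφ, if_pos (by omega : j ≤ b + 3)]
        rw [hcong, hE, EML_hom hμ0 hμ1 hν1 hν2 hα]
    have hzprop : (∀ n : ℕ, b + 4 ≤ n → (0:ℝ) = 0) ∧ (0:ℝ) = 0 ∧ (0:ℝ) = 0 ∧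
        ∀ t ≤ b + 1,
          -(gY ν (fun _ => (0:ℝ)) (t + 2) - 2 * gY ν (fun _ => (0:ℝ)) (t + 1)
              + gY ν (fun _ => (0:ℝ)) t)
            + α * (WY μ (fun _ => (0:ℝ)) (t + 1) - WY μ (fun _ => (0:ℝ)) t)
            = (fun _ : ℕ => (0:ℝ)) (t + 1) := by
      refine ⟨fun _ _ => rfl, rfl, rfl, fun t _ => ?_⟩
      simp [gY, WY]
    have h1 := huniq φ hφprop
    have h2 := huniq (fun _ => (0:ℝ)) ⟨fun n hn => rfl, rfl, rfl, hzprop.2.2.2⟩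
    have : φ 1 = 0 := by rw [h1, ← h2]
    rw [hφ] at this
    simp only [if_pos (by omega : 1 ≤ b + 3)] at this
    exact hE1ne this
  · -- E (b+3) ≠ 0 → unique solvability
    intro hne H
    set P : ℕ → ℝ := sol μ ν α H 0 with hP
    set r : ℝ := -(P (b + 3)) / E (b + 3) with hr
    set Y : ℕ → ℝ := fun n => if n ≤ b + 3 then P n + r * E n else 0 with hY
    have hYprop : (∀ n : ℕ, b + 4 ≤ n → Y n = 0) ∧ Y 0 = 0 ∧ Y (b + 3) = 0 ∧
        ∀ t ≤ b + 1,
          -(gY ν Y (t + 2) - 2 * gY ν Y (t + 1) + gY ν Y t)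
            + α * (WY μ Y (t + 1) - WY μ Y t) = H (t + 1) := by
      refine ⟨fun n hn => by simp [hY, if_neg (by omega : ¬ n ≤ b + 3)], ?_, ?_, ?_⟩
      · simp only [hY, if_pos (by omega : 0 ≤ b + 3)]
        rw [hP, sol_zero, hE0]; ring
      · simp only [hY, if_pos (le_refl (b + 3))]
        rw [hr]; field_simp
        ring
      · intro t ht
        rw [hEqdef]
        have hcong : EqT μ ν α Y t = EqT μ ν α (fun n => P n + r * E n) t :=
          EqT_congr fun j hj => by simp [hY, if_pos (by omega : j ≤ b + 3)]
        rw [hcong, EqT_lin, sol_spec hμ0 hμ1 hν1 hν2 hα H 0 t, hE,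
          EML_hom hμ0 hμ1 hν1 hν2 hα]
        ring
    refine ⟨Y, hYprop, ?_⟩
    rintro Z ⟨hZhigh, hZ0, hZb, hZeq⟩
    set s : ℝ := Z 1 with hs
    have hZeq' : ∀ t ≤ b + 1, EqT μ ν α Z t = H (t + 1) := by
      intro t ht; rw [← hEqdef]; exact hZeq t ht
    have hZsol : ∀ n ≤ b + 3, Z n = sol μ ν α H s n :=
      sol_unique hμ0 hμ1 hν1 hν2 hα H s b Z hZ0 rfl hZeq'
    -- the combination X with X 1 = s also equals sol H s
    set c : ℝ := s * (1 - α) with hc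
    set X : ℕ → ℝ := fun n => P n + c * E n with hX
    have hXsol : ∀ n ≤ b + 3, X n = sol μ ν α H s n := by
      refine sol_unique hμ0 hμ1 hν1 hν2 hα H s b X ?_ ?_ ?_
      · rw [hX]; simp only []; rw [hP, sol_zero, hE0]; ring
      · rw [hX]; simp only []; rw [hP, sol_one, hE, EML_one hα, hc]
        field_simp
        ring
      · intro t ht
        rw [hX, EqT_lin, sol_spec hμ0 hμ1 hν1 hν2 hα H 0 t, hE,
          EML_hom hμ0 hμ1 hν1 hν2 hα]
        ring
    have hZX : ∀ n ≤ b + 3, Z n = X n := fun n hn => by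
      rw [hZsol n hn, hXsol n hn]
    -- boundary forces c = r
    have hbd : P (b + 3) + c * E (b + 3) = 0 := by
      have := hZX (b + 3) (le_refl _)
      rw [hZb] at this
      rw [hX] at this
      exact this.symm
    have hcr : c = r := by
      have hbd2 : P (b + 3) + r * E (b + 3) = 0 := by
        rw [hr]; field_simp
        ring
      have : (c - r) * E (b + 3) = 0 := by linarith [hbd, hbd2]
      rcases mul_eq_zero.mp this with h | h
      · linarith
      · exact absurd h hne
    funext n
    by_cases hn : n ≤ b + 3
    · rw [hZX n hn, hX, hY]
      simp only [if_pos hn, hcr]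
    · rw [hZhigh n (by omega), hY]
      simp only [if_neg hn]
end
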